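/- arXiv:2508.10236 — 7 statements merged into one kernel-verified Lean document; each statement's English description precedes it below -/
import Mathlib

section
/- Let A be a Γ-invariant central hyperplane arrangement defined over L. Then the permutation character χ_{A,q} is a quasi-polynomial in q with values in the ring of ℂ-valued class functions on Γ: there exist ñ ∈ ℤ_{>0} and polynomials f^{(1)}, …, f^{(ñ)} with class-function coefficients such that χ_{A,q} = f^{(r)}(q) whenever q ≡ r (mod ñ). Furthermore, χ_{A,q} has the gcd-property: gcd(ñ, r_1) = gcd(ñ, r_2) implies f^{(r_1)} = f^{(r_2)}. -/
/-!
Fix `γ`. By inclusion–exclusion over the hyperplanes, the number of `ρ_q(γ)`-fixed points of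
`M(A;q)` is an alternating sum, over `t ⊆ {1,…,n}`, of the number of `x ∈ (ℤ/q)^ℓ` killing the
lattice `N` spanned by the columns of `ρ(γ) - 1` and the `α i` with `i ∈ t`. These `x` are the
elements of `Hom(ℤ^ℓ / N, ℤ/q)`, so by the Smith normal form of `N` their number is
`∏ₖ gcd(dₖ, q)`. Hence `χ_q(γ) = ∑ₜ (-1)^|t| ∏ₖ gcd(d_{γ,t,k}, q)`. If `Ñ` is divisible by all
nonzero `d_{γ,t,k}`, each factor `gcd(d, q)` is either `q` (when `d = 0`) or depends only on
`gcd(Ñ, q)`, which gives the quasi-polynomial with the gcd-property. The coefficients are class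
functions because `χ_q` is (the arrangement is `Γ`-stable) and a polynomial is determined by its
values on the infinitely many `q` of a fixed residue class.
-/

open Matrix Finset Polynomial

theorem IsAddCyclic.card_zsmul_eq_zero {G : Type*} [AddCommGroup G] [IsAddCyclic G] [Finite G]
    (a : ℤ) : Nat.card {y : G // a • y = 0} = Nat.gcd a.natAbs (Nat.card G) := by
  rw [Nat.gcd_comm, ← IsAddCyclic.card_nsmulAddMonoidHom_ker]
  exact Nat.card_congr <| Equiv.subtypeEquivRight fun y => natAbs_nsmul_eq_zero.symm

theorem Function.Injective.forall_extend_zero_iff {α β G : Type*} [Zero G] {f : α → β}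
    (hf : Function.Injective f) (a : α → G) (P : β → G → Prop) (hP : ∀ k, P k 0) :
    (∀ k, P k (Function.extend f a 0 k)) ↔ ∀ i, P (f i) (a i) := by
  refine ⟨fun h i => by simpa only [hf.extend_apply] using h (f i), fun h k => ?_⟩
  by_cases hk : ∃ i, f i = k
  · obtain ⟨i, rfl⟩ := hk
    rw [hf.extend_apply]
    exact h i
  · rw [Function.extend_apply' _ _ _ hk]
    exact hP k

theorem Submodule.exists_card_le_ker_eq_prod_gcd {ι M : Type*} [Fintype ι] [AddCommGroup M]
    (b : Module.Basis ι ℤ M) (N : Submodule ℤ M) :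
    ∃ d : ι → ℕ, ∀ (q : ℕ) [NeZero q],
      Nat.card {φ : M →ₗ[ℤ] ZMod q // N ≤ LinearMap.ker φ} = ∏ k, Nat.gcd (d k) q := by
  obtain ⟨n, snf⟩ := N.smithNormalForm b
  -- the elementary divisors of `N`, padded with zeros
  set a := Function.extend snf.f snf.a 0
  refine ⟨fun k => (a k).natAbs, fun q _ => ?_⟩
  have hker (y : ι → ZMod q) : (∀ k, a k • y k = 0) ↔ N ≤ LinearMap.ker (snf.bM.constr ℕ y) := by
    rw [snf.f.injective.forall_extend_zero_iff snf.a (fun k c => c • y k = 0)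
      (fun _ => zero_smul ..), LinearMap.le_ker_iff_comp_subtype_eq_zero]
    have hbN (i : Fin n) : snf.bM.constr ℕ y (snf.bN i) = snf.a i • y (snf.f i) := by
      rw [snf.snf, map_zsmul, Module.Basis.constr_basis]
    exact ⟨fun h => snf.bN.ext fun i => (hbN i).trans (h i),
      fun h i => (hbN i).symm.trans (LinearMap.congr_fun h (snf.bN i))⟩
  calc Nat.card {φ : M →ₗ[ℤ] ZMod q // N ≤ LinearMap.ker φ}
      = Nat.card {y : ι → ZMod q // ∀ k, a k • y k = 0} :=
        Nat.card_congr ((snf.bM.constr ℕ).toEquiv.subtypeEquiv hker).symm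
    _ = ∏ k, Nat.gcd (a k).natAbs q := by
        rw [Nat.card_congr (Equiv.subtypePiEquivPi (p := fun k (z : ZMod q) => a k • z = 0)),
          Nat.card_pi]
        simp only [IsAddCyclic.card_zsmul_eq_zero, Nat.card_zmod]

theorem card_subtype_forall_not_and_eq_sum {α ι : Type*} [Fintype α] [Fintype ι]
    (Q : ι → α → Prop) (P : α → Prop) :
    (Nat.card {x // (∀ i, ¬ Q i x) ∧ P x} : ℤ) =
      ∑ t : Finset ι, (-1) ^ #t * (Nat.card {x // (∀ i ∈ t, Q i x) ∧ P x} : ℤ) := by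
  classical
  have key := inclusion_exclusion_sum_inf_compl univ (fun i => univ.filter (Q i))
    (fun x => if P x then (1 : ℤ) else 0)
  simp only [sum_boole, smul_eq_mul, powerset_univ] at key
  simp only [Nat.card_eq_fintype_card, Fintype.card_subtype]
  have hcompl : univ.filter (fun x => (∀ i, ¬ Q i x) ∧ P x) =
      (univ.inf fun i => (univ.filter (Q i))ᶜ).filter P := by
    ext x; simp [mem_inf]
  have hinter (t : Finset ι) : univ.filter (fun x => (∀ i ∈ t, Q i x) ∧ P x) =
      (t.inf fun i => univ.filter (Q i)).filter P := by
    ext x; simp [mem_inf]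
  simp only [hcompl, hinter, key]

theorem Matrix.vecMul_map_intCast_eq_self_iff {ι R : Type*} [Fintype ι] [DecidableEq ι] [CommRing R]
    (A : Matrix ι ι ℤ) (x : ι → R) :
    x ᵥ* A.map Int.cast = x ↔ ∀ j, x ⬝ᵥ (fun k => ((Aᵀ j - Pi.single j 1 : ι → ℤ) k : R)) = 0 := by
  rw [funext_iff]
  refine forall_congr' fun j => ?_
  simp [vecMul, dotProduct, mul_sub, Finset.sum_sub_distrib, sub_eq_zero, Pi.single_apply]

theorem exists_card_forall_dotProduct_eq_zero {ι : Type*} [Fintype ι]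
    (s : Set (ι → ℤ)) : ∃ d : ι → ℕ, ∀ (q : ℕ) [NeZero q],
      Nat.card {x : ι → ZMod q // ∀ v ∈ s, x ⬝ᵥ (fun k => (v k : ZMod q)) = 0} =
        ∏ k, Nat.gcd (d k) q := by
  obtain ⟨d, hd⟩ := (Submodule.span ℤ s).exists_card_le_ker_eq_prod_gcd (Pi.basisFun ℤ ι)
  refine ⟨d, fun q _ => ?_⟩
  rw [← hd q]
  refine Nat.card_congr <| ((Pi.basisFun ℤ ι).constr ℕ).toEquiv.subtypeEquiv fun x => ?_
  rw [Submodule.span_le]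
  refine forall₂_congr fun v _ => ?_
  simp [Module.Basis.constr_apply_fintype, dotProduct, zsmul_eq_mul, mul_comm]

theorem exists_card_fixedPoints_compl_eq_sum {ι κ : Type*} [Fintype ι] [DecidableEq ι]
    [Fintype κ] (α : κ → ι → ℤ) (A : Matrix ι ι ℤ) :
    ∃ d : Finset κ → ι → ℕ, ∀ (q : ℕ) [NeZero q],
      (Nat.card {x : ι → ZMod q //
        (∀ i, x ⬝ᵥ (fun j => (α i j : ZMod q)) ≠ 0) ∧ x ᵥ* A.map Int.cast = x} : ℤ) =
        ∑ t : Finset κ, (-1) ^ #t * ∏ k, (Nat.gcd (d t k) q : ℤ) := by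
  classical
  choose d hd using fun t : Finset κ =>
    exists_card_forall_dotProduct_eq_zero (α '' t ∪ Set.range fun j => Aᵀ j - Pi.single j 1)
  refine ⟨d, fun q _ => ?_⟩
  rw [card_subtype_forall_not_and_eq_sum]
  refine sum_congr rfl fun t _ => ?_
  rw [← Nat.cast_prod, ← hd t q]
  congr 2
  refine Nat.card_congr <| Equiv.subtypeEquivRight fun x => ?_
  simp only [vecMul_map_intCast_eq_self_iff, Set.mem_union, or_imp, forall_and,
    Set.forall_mem_image, Set.forall_mem_range, mem_coe]

namespace Polynomial

variable {ι R : Type*} [Fintype ι] [DecidableEq ι] [CommSemiring R]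

noncomputable def ofPi (p : ι → R[X]) : (ι → R)[X] :=
  ∑ i, C (Pi.single i 1) * (p i).map (algebraMap R (ι → R))

theorem map_evalRingHom_ofPi (p : ι → R[X]) (i : ι) :
    (ofPi p).map (Pi.evalRingHom (fun _ => R) i) = p i := by
  have hcomp : (Pi.evalRingHom (fun _ => R) i).comp (algebraMap R (ι → R)) = RingHom.id R := rfl
  simp [ofPi, Polynomial.map_sum, Polynomial.map_mul, map_map, hcomp, Pi.single_apply]

theorem coeff_ofPi_apply (p : ι → R[X]) (m : ℕ) (i : ι) : (ofPi p).coeff m i = (p i).coeff m := by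
  rw [← map_evalRingHom_ofPi p i, coeff_map]
  rfl

theorem eval_ofPi_apply (p : ι → R[X]) (c : ι → R) (i : ι) :
    (ofPi p).eval c i = (p i).eval (c i) := by
  rw [← map_evalRingHom_ofPi p i, eval_map]
  exact (eval₂_hom (Pi.evalRingHom (fun _ => R) i) c).symm

end Polynomial

theorem Polynomial.eq_of_eval_natCast_eq_of_natCast_eq {R : Type*} [CommRing R] [IsDomain R]
    [CharZero R] {N : ℕ} [NeZero N] (r : ZMod N) {p₁ p₂ : R[X]}
    (h : ∀ q : ℕ, 0 < q → (q : ZMod N) = r → p₁.eval (q : R) = p₂.eval (q : R)) : p₁ = p₂ := by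
  have hN : 0 < N := Nat.pos_of_neZero N
  refine eq_of_infinite_eval_eq p₁ p₂ <| Set.infinite_of_injective_forall_mem
    (f := fun k : ℕ => ((r.val + (k + 1) * N : ℕ) : R)) ?_ fun k => h _ (by positivity) ?_
  · refine Nat.cast_injective.comp (StrictMono.injective fun a b hab => ?_)
    gcongr
  · push_cast
    rw [ZMod.natCast_self, mul_zero, add_zero, ZMod.natCast_zmod_val]

theorem Nat.gcd_gcd_val_natCast {e N : ℕ} (he : e ∣ N) (q : ℕ) :
    Nat.gcd e (Nat.gcd N (q : ZMod N).val) = Nat.gcd e q := by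
  rw [ZMod.val_natCast, Nat.gcd_comm N (q % N), ← Nat.gcd_rec, ← Nat.gcd_assoc, Nat.gcd_eq_left he]

theorem exists_pos_forall_ne_zero_dvd {I : Type*} [Finite I] (d : I → ℕ) :
    ∃ N, 0 < N ∧ ∀ i, d i ≠ 0 → d i ∣ N := by
  have := Fintype.ofFinite I
  refine ⟨∏ i, if d i = 0 then 1 else d i, Finset.prod_pos fun i _ => ?_, fun i hi => ?_⟩
  · split_ifs <;> omega
  · simpa [hi] using Finset.dvd_prod_of_mem (fun i => if d i = 0 then 1 else d i) (mem_univ i)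

section GcdPolynomial

variable {T ι R : Type*} [Fintype T] [Fintype ι] [CommRing R]

/-- The factor `X` stands for `gcd 0 q = q`. -/
noncomputable def gcdPolynomial (c : T → R) (d : T → ι → ℕ) (g : ℕ) : R[X] :=
  ∑ t, C (c t) * ∏ k, if d t k = 0 then X else C (Nat.gcd (d t k) g : R)

theorem eval_gcdPolynomial (c : T → R) {d : T → ι → ℕ} {N : ℕ}
    (hd : ∀ t k, d t k ≠ 0 → d t k ∣ N) (q : ℕ) :
    (gcdPolynomial c d (Nat.gcd N (q : ZMod N).val)).eval (q : R) =
      ∑ t, c t * ∏ k, (Nat.gcd (d t k) q : R) := by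
  simp only [gcdPolynomial, eval_finsetSum, eval_mul, eval_C, eval_prod]
  refine sum_congr rfl fun t _ => congrArg _ <| prod_congr rfl fun k _ => ?_
  by_cases h : d t k = 0
  · simp [h]
  · rw [if_neg h, eval_C, Nat.gcd_gcd_val_natCast (hd t k h)]

end GcdPolynomial

namespace Matrix.GeneralLinearGroup

variable {ι R : Type*} [Fintype ι] [DecidableEq ι] [CommRing R]

def vecMulEquiv (g : GL ι R) : (ι → R) ≃ (ι → R) where
  toFun x := x ᵥ* g
  invFun x := x ᵥ* ↑g⁻¹
  left_inv x := by simp [vecMul_vecMul]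
  right_inv x := by simp [vecMul_vecMul]

theorem card_fixedPoints_vecMul_conj {Γ : Type*} [Group Γ] (ρ : Γ →* GL ι R) {M : Set (ι → R)}
    (hM : ∀ σ, ∀ x ∈ M, x ᵥ* ↑(ρ σ) ∈ M) (γ σ : Γ) :
    Nat.card {x // x ∈ M ∧ x ᵥ* ↑(ρ (σ * γ * σ⁻¹)) = x} =
      Nat.card {x // x ∈ M ∧ x ᵥ* ↑(ρ γ) = x} := by
  have hρ (x : ι → R) (a b : Γ) :
      x ᵥ* (ρ a : Matrix ι ι R) ᵥ* (ρ b : Matrix ι ι R) = x ᵥ* (ρ (a * b) : Matrix ι ι R) := by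
    rw [vecMul_vecMul, map_mul, Units.val_mul]
  refine Nat.card_congr <| (vecMulEquiv (ρ σ)).subtypeEquiv fun x => and_congr ?_ ?_
  · refine ⟨hM σ x, fun hx => ?_⟩
    simpa only [vecMulEquiv, Equiv.coe_fn_mk, hρ, mul_inv_cancel, map_one, Units.val_one,
      vecMul_one] using hM σ⁻¹ _ hx
  · rw [← (vecMulEquiv (ρ σ)).injective.eq_iff]
    simp only [vecMulEquiv, Equiv.coe_fn_mk, hρ, inv_mul_cancel_right]

end Matrix.GeneralLinearGroup

theorem vecMul_map_intCast_dotProduct_ne_zero {ι κ R : Type*} [Fintype ι] [CommRing R]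
    {α : κ → ι → ℤ} {A : Matrix ι ι ℤ} (hA : ∀ i, ∃ j, A *ᵥ α i = α j ∨ A *ᵥ α i = -α j)
    {x : ι → R} (hx : ∀ i, x ⬝ᵥ (fun k => (α i k : R)) ≠ 0) (i : κ) :
    (x ᵥ* A.map Int.cast) ⬝ᵥ (fun k => (α i k : R)) ≠ 0 := by
  have hcast : A.map Int.cast *ᵥ (fun k => (α i k : R)) = fun k => ((A *ᵥ α i) k : R) :=
    funext fun k => ((Int.castRingHom R).map_mulVec A (α i) k).symm
  rw [← dotProduct_mulVec, hcast]
  obtain ⟨j, hj | hj⟩ := hA i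
  · simpa only [hj] using hx j
  · rw [hj]
    simpa [dotProduct] using hx j

theorem stmt_2_general {ℓ n : ℕ} {Γ : Type*} [Group Γ] [Fintype Γ]
    (ρ : Γ →* Matrix.GeneralLinearGroup (Fin ℓ) ℤ)
    (α : Fin n → Fin ℓ → ℤ)
    (hinv : ∀ (γ : Γ) (i : Fin n), ∃ j : Fin n,
      ((↑(ρ γ)⁻¹ : Matrix (Fin ℓ) (Fin ℓ) ℤ) *ᵥ α i = α j) ∨
      ((↑(ρ γ)⁻¹ : Matrix (Fin ℓ) (Fin ℓ) ℤ) *ᵥ α i = -α j))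
    (χ : ℕ → Γ → ℂ)
    (hχ : ∀ q : ℕ, 0 < q → ∀ γ : Γ, χ q γ =
      Nat.card {x : Fin ℓ → ZMod q //
        (∀ i : Fin n, x ⬝ᵥ (fun j => ((α i j : ℤ) : ZMod q)) ≠ 0) ∧
        x ᵥ* (((ρ γ : Matrix (Fin ℓ) (Fin ℓ) ℤ)).map (Int.cast : ℤ → ZMod q)) = x}) :
    ∃ N : ℕ, 0 < N ∧ ∃ C : ZMod N → Polynomial (Γ → ℂ),
      (∀ q : ℕ, 0 < q → χ q = (C (q : ZMod N)).eval ((q : ℕ) : Γ → ℂ)) ∧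
      (∀ (r : ZMod N) (m : ℕ) (γ σ : Γ), ((C r).coeff m) (σ * γ * σ⁻¹) = ((C r).coeff m) γ) ∧
      (∀ r₁ r₂ : ZMod N, Nat.gcd N r₁.val = Nat.gcd N r₂.val → C r₁ = C r₂) := by
  classical
  choose d hd using fun γ => exists_card_fixedPoints_compl_eq_sum α (ρ γ)
  obtain ⟨N, hNpos, hN⟩ :=
    exists_pos_forall_ne_zero_dvd fun p : Γ × Finset (Fin n) × Fin ℓ => d p.1 p.2.1 p.2.2
  have : NeZero N := ⟨hNpos.ne'⟩
  let P (γ : Γ) (g : ℕ) : ℂ[X] := gcdPolynomial (fun t : Finset (Fin n) => (-1) ^ #t) (d γ) g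
  have hP (q : ℕ) (hq : 0 < q) (γ : Γ) :
      (P γ (Nat.gcd N (q : ZMod N).val)).eval (q : ℂ) = χ q γ := by
    have : NeZero q := ⟨hq.ne'⟩
    rw [eval_gcdPolynomial _ fun t k => hN (γ, t, k), hχ q hq γ]
    exact_mod_cast (hd γ q).symm
  have hconj (q : ℕ) (hq : 0 < q) (γ σ : Γ) : χ q (σ * γ * σ⁻¹) = χ q γ := by
    rw [hχ q hq, hχ q hq]
    exact congrArg _ <| GeneralLinearGroup.card_fixedPoints_vecMul_conj
      ((GeneralLinearGroup.map (Int.castRingHom (ZMod q))).comp ρ)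
      (M := {x | ∀ i, x ⬝ᵥ (fun j => (α i j : ZMod q)) ≠ 0})
      (fun σ x hx => vecMul_map_intCast_dotProduct_ne_zero (by simpa using hinv σ⁻¹) hx) γ σ
  refine ⟨N, hNpos, fun r => ofPi fun γ => P γ (Nat.gcd N r.val), fun q hq => ?_,
    fun r m γ σ => ?_, fun r₁ r₂ h => by dsimp only; rw [h]⟩
  · ext γ
    rw [eval_ofPi_apply, Pi.natCast_apply, hP q hq]
  · rw [coeff_ofPi_apply, coeff_ofPi_apply]
    refine congrArg (coeff · m) <| eq_of_eval_natCast_eq_of_natCast_eq r fun q hq hqr => ?_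
    rw [← hqr, hP q hq, hP q hq, hconj q hq]

/-- Let `A` be a `Γ`-invariant central hyperplane arrangement over `L = ℤ^ℓ`
(given by the coordinate vectors `α i` of the defining linear forms, with `Γ` acting through an
injective `ρ : Γ →* GL(L)` on row vectors, and the dual action permuting `{±α 1,…,±α n}`).
Let `χ q : Γ → ℂ` be the permutation character of `Γ` on
`M(A;q) = {x̄ ∈ (ZMod q)^ℓ | x̄ ⬝ᵥ α i ≠ 0 ∀ i}`, i.e. `χ q γ` is the number of points of
`M(A;q)` fixed by `ρ_q(γ)`.  Then `χ` is a quasi-polynomial in `q` with values in the ring of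
`ℂ`-valued class functions on `Γ`: there are `N > 0` and polynomials `C r` over `Γ → ℂ` whose
coefficients are class functions, with `χ q = (C (q mod N)).eval q` for all `q > 0`; moreover
`χ` has the gcd-property: `gcd N r₁ = gcd N r₂ → C r₁ = C r₂`. -/
theorem stmt_2 {ℓ n : ℕ} {Γ : Type*} [Group Γ] [Fintype Γ]
    (ρ : Γ →* Matrix.GeneralLinearGroup (Fin ℓ) ℤ)
    (hρ : Function.Injective ρ)
    (α : Fin n → Fin ℓ → ℤ)
    (hinv : ∀ (γ : Γ) (i : Fin n), ∃ j : Fin n,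
      ((↑(ρ γ)⁻¹ : Matrix (Fin ℓ) (Fin ℓ) ℤ) *ᵥ α i = α j) ∨
      ((↑(ρ γ)⁻¹ : Matrix (Fin ℓ) (Fin ℓ) ℤ) *ᵥ α i = -α j))
    (χ : ℕ → Γ → ℂ)
    (hχ : ∀ q : ℕ, 0 < q → ∀ γ : Γ, χ q γ =
      Nat.card {x : Fin ℓ → ZMod q //
        (∀ i : Fin n, x ⬝ᵥ (fun j => ((α i j : ℤ) : ZMod q)) ≠ 0) ∧
        x ᵥ* (((ρ γ : Matrix (Fin ℓ) (Fin ℓ) ℤ)).map (Int.cast : ℤ → ZMod q)) = x}) :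
    ∃ N : ℕ, 0 < N ∧ ∃ C : ZMod N → Polynomial (Γ → ℂ),
      (∀ q : ℕ, 0 < q → χ q = (C (q : ZMod N)).eval ((q : ℕ) : Γ → ℂ)) ∧
      (∀ (r : ZMod N) (m : ℕ) (γ σ : Γ), ((C r).coeff m) (σ * γ * σ⁻¹) = ((C r).coeff m) γ) ∧
      (∀ r₁ r₂ : ZMod N, Nat.gcd N r₁.val = Nat.gcd N r₂.val → C r₁ = C r₂) :=
  stmt_2_general ρ α hinv χ hχ
end

section
/- Let γ ∈ Γ, and suppose U and V are ℓ×ℓ unimodular integer matrices and d_1, …, d_ℓ are integers such that U(R_γ − I)V = diag(d_1, …, d_ℓ). Then π_T^{-1}(T^γ) = {x ∈ L_ℝ : ρ(γ)(x) − x ∈ L} is equal to the direct sum (⊕_{i : d_i ≠ 0} d_i^{-1}ℤ u_i) ⊕ (⊕_{i : d_i = 0} ℝ u_i), where u_i ∈ L is the element whose coordinate vector in the fixed basis is the i-th row of U. -/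
open Matrix

/-- The lattice `L = ℤ^ℓ` sitting inside `L_ℝ = ℝ^ℓ`. -/
def intLattice (ℓ : ℕ) : AddSubgroup (Fin ℓ → ℝ) :=
  AddSubgroup.pi Set.univ fun _ => AddSubgroup.zmultiples (1 : ℝ)

/-- Let `γ ∈ Γ` and suppose `U, V` are `ℓ×ℓ` unimodular integer matrices and
`d 1, …, d ℓ` integers with `U (R_γ − I) V = diag (d 1, …, d ℓ)`.  Then
`π_T⁻¹(T^γ) = {x ∈ L_ℝ : ρ(γ)(x) − x ∈ L}` equals
`(⊕_{d i ≠ 0} (d i)⁻¹ ℤ u i) ⊕ (⊕_{d i = 0} ℝ u i)`, where `u i ∈ L` is the `i`-th row of `U`: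
explicitly, it is the set of `x = ∑ i, c i • u i` with `c i ∈ (d i)⁻¹ ℤ` whenever `d i ≠ 0`
(and `c i ∈ ℝ` arbitrary when `d i = 0`). -/
theorem stmt_6 {ℓ : ℕ} {Γ : Type*} [Group Γ] [Fintype Γ]
    (ρ : Γ →* Matrix.GeneralLinearGroup (Fin ℓ) ℤ)
    (hρ : Function.Injective ρ)
    (γ : Γ)
    (U V : Matrix (Fin ℓ) (Fin ℓ) ℤ)
    (hU : U.det = 1 ∨ U.det = -1) (hV : V.det = 1 ∨ V.det = -1)
    (d : Fin ℓ → ℤ)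
    (hdiag : U * ((ρ γ : Matrix (Fin ℓ) (Fin ℓ) ℤ) - 1) * V = Matrix.diagonal d) :
    {x : Fin ℓ → ℝ |
      (x ᵥ* (((ρ γ : Matrix (Fin ℓ) (Fin ℓ) ℤ)).map (Int.cast : ℤ → ℝ))) - x
        ∈ intLattice ℓ} =
    {x : Fin ℓ → ℝ | ∃ c : Fin ℓ → ℝ,
      (∀ i, d i ≠ 0 → ∃ a : ℤ, c i = (a : ℝ) / (d i : ℝ)) ∧
      x = ∑ i, c i • (fun j => ((U i j : ℤ) : ℝ))} := by
  classical
  have hUdet : IsUnit U.det := by rcases hU with h | h <;> simp [h]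
  have hVdet : IsUnit V.det := by rcases hV with h | h <;> simp [h]
  set R : Matrix (Fin ℓ) (Fin ℓ) ℤ := (ρ γ : Matrix (Fin ℓ) (Fin ℓ) ℤ) with hR
  have mapc : ∀ A B : Matrix (Fin ℓ) (Fin ℓ) ℤ,
      (A * B).map (Int.cast : ℤ → ℝ) = A.map Int.cast * B.map Int.cast := fun A B =>
    Matrix.map_mul (f := Int.castRingHom ℝ)
  have maps : ∀ A B : Matrix (Fin ℓ) (Fin ℓ) ℤ,
      (A - B).map (Int.cast : ℤ → ℝ) = A.map Int.cast - B.map Int.cast := fun A B => by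
    funext i j; simp [Matrix.map_apply, Matrix.sub_apply]
  have map1 : (1 : Matrix (Fin ℓ) (Fin ℓ) ℤ).map (Int.cast : ℤ → ℝ) = 1 :=
    Matrix.map_one _ (by simp) (by simp)
  have mapdiag : (Matrix.diagonal d).map (Int.cast : ℤ → ℝ)
      = Matrix.diagonal (fun i => (d i : ℝ)) := Matrix.diagonal_map (by simp)
  set Uℝ := U.map (Int.cast : ℤ → ℝ)
  set Vℝ := V.map (Int.cast : ℤ → ℝ)
  set Rℝ := R.map (Int.cast : ℤ → ℝ)
  set Dℝ : Matrix (Fin ℓ) (Fin ℓ) ℝ := Matrix.diagonal (fun i => (d i : ℝ)) with hD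
  have hdiagℝ : Uℝ * (Rℝ - 1) * Vℝ = Dℝ := by
    have h := congrArg (fun M : Matrix (Fin ℓ) (Fin ℓ) ℤ => M.map (Int.cast : ℤ → ℝ)) hdiag
    rw [mapc, mapc, maps, map1, mapdiag] at h
    exact h
  set U' := U⁻¹
  set V' := V⁻¹
  have hU'Uℝ : (U'.map (Int.cast : ℤ → ℝ)) * Uℝ = 1 := by
    have h := congrArg (fun M : Matrix (Fin ℓ) (Fin ℓ) ℤ => M.map (Int.cast : ℤ → ℝ))
      (Matrix.nonsing_inv_mul U hUdet)
    rw [mapc, map1] at h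
    exact h
  have hVV'ℝ : Vℝ * (V'.map (Int.cast : ℤ → ℝ)) = 1 := by
    have h := congrArg (fun M : Matrix (Fin ℓ) (Fin ℓ) ℤ => M.map (Int.cast : ℤ → ℝ))
      (Matrix.mul_nonsing_inv V hVdet)
    rw [mapc, map1] at h
    exact h
  have memL : ∀ v : Fin ℓ → ℝ, v ∈ intLattice ℓ ↔ ∀ i, ∃ a : ℤ, v i = a := by
    intro v
    simp [intLattice, AddSubgroup.mem_pi, AddSubgroup.mem_zmultiples_iff, eq_comm]
  have intMul : ∀ (v : Fin ℓ → ℝ) (M : Matrix (Fin ℓ) (Fin ℓ) ℤ),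
      (∀ i, ∃ a : ℤ, v i = a) → ∀ j, ∃ a : ℤ,
        (v ᵥ* M.map (Int.cast : ℤ → ℝ)) j = a := by
    intro v M hv j
    choose a ha using hv
    refine ⟨∑ i, a i * M i j, ?_⟩
    simp only [Matrix.vecMul, dotProduct, Matrix.map_apply, ha]
    push_cast
    ring
  have sumU : ∀ cvec : Fin ℓ → ℝ,
      (∑ i, cvec i • (fun j => ((U i j : ℤ) : ℝ))) = cvec ᵥ* Uℝ := by
    intro cvec; funext j
    simp [Matrix.vecMul, dotProduct, Finset.sum_apply, Matrix.map_apply, Uℝ]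
  ext x
  simp only [Set.mem_setOf_eq]
  have hsub : ∀ v : Fin ℓ → ℝ, v ᵥ* Rℝ - v = v ᵥ* (Rℝ - 1) := fun v => by
    rw [Matrix.vecMul_sub, Matrix.vecMul_one]
  constructor
  · intro hx
    rw [hsub x, memL] at hx
    set c : Fin ℓ → ℝ := x ᵥ* (U'.map (Int.cast : ℤ → ℝ)) with hc
    have hx' : x = c ᵥ* Uℝ := by
      rw [hc, Matrix.vecMul_vecMul, hU'Uℝ, Matrix.vecMul_one]
    have hcd : ∀ i, ∃ a : ℤ, c i * (d i : ℝ) = a := by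
      have h1 : c ᵥ* Dℝ = (x ᵥ* (Rℝ - 1)) ᵥ* Vℝ := by
        rw [← hdiagℝ, ← Matrix.vecMul_vecMul, ← Matrix.vecMul_vecMul, ← hx']
      intro i
      have h2 := intMul _ V hx i
      have h3 : (c ᵥ* Dℝ) i = c i * (d i : ℝ) := Matrix.vecMul_diagonal _ _ _
      rw [← h3, h1]
      exact h2
    refine ⟨c, ?_, ?_⟩
    · intro i hdi
      obtain ⟨a, ha⟩ := hcd i
      refine ⟨a, ?_⟩
      rw [eq_div_iff (by exact_mod_cast hdi)]
      exact ha
    · rw [sumU, hx']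
  · rintro ⟨c, hc, rfl⟩
    rw [sumU, hsub (c ᵥ* Uℝ), memL]
    have hcd : ∀ i, ∃ a : ℤ, (c ᵥ* Dℝ) i = a := by
      intro i
      rw [Matrix.vecMul_diagonal]
      by_cases hdi : d i = 0
      · exact ⟨0, by simp [hdi]⟩
      · obtain ⟨a, ha⟩ := hc i hdi
        exact ⟨a, by rw [ha]; field_simp⟩
    have key : (c ᵥ* Uℝ) ᵥ* (Rℝ - 1) = (c ᵥ* Dℝ) ᵥ* (V'.map (Int.cast : ℤ → ℝ)) := by
      rw [Matrix.vecMul_vecMul, Matrix.vecMul_vecMul, ← hdiagℝ]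
      rw [Matrix.mul_assoc (Uℝ * (Rℝ - 1)), hVV'ℝ, Matrix.mul_one]
    rw [key]
    exact intMul _ V' hcd
end

section
/- Let γ ∈ Γ, and suppose U and V are ℓ×ℓ unimodular integer matrices and d_1, …, d_ℓ are integers such that U(R_γ − I)V = diag(d_1, …, d_ℓ). Then T^γ = π_T((⊕_{i : d_i ≠ 0} d_i^{-1}ℤ u_i) ⊕ (⊕_{i : d_i = 0} ℝ u_i)) = { Σ_{d_i ≠ 0} π_T(a_i · d_i^{-1} u_i) + Σ_{d_i = 0} π_T(b_i · u_i) : a_i ∈ ℤ, b_i ∈ ℝ }. Furthermore, for every q ∈ ℤ_{>0}, the set of q-torsion points fixed by γ is T[q]^γ = { Σ_{d_i ≠ 0} π_T(a_i · gcd(d_i,q)^{-1} u_i) + Σ_{d_i = 0} π_T(b_i · q^{-1} u_i) : a_i, b_i ∈ ℤ }. -/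
open Matrix

/-- The `ℓ`-torus `T = L_ℝ / L`. -/
abbrev Torus (ℓ : ℕ) := (Fin ℓ → ℝ) ⧸ intLattice ℓ

/-- The natural projection `π_T : L_ℝ → T`. -/
abbrev pT (ℓ : ℕ) : (Fin ℓ → ℝ) →+ Torus ℓ := QuotientAddGroup.mk' (intLattice ℓ)

/-!
Write `x = y U`. Multiplication by an integer matrix of determinant `±1` maps `ℤ^ℓ` onto itself,
so `x R_γ - x ∈ ℤ^ℓ` iff `(x R_γ - x) V = y U (R_γ - 1) V = y diag(d) ∈ ℤ^ℓ`, i.e. `y i * d i ∈ ℤ`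
for all `i`; likewise `q x ∈ ℤ^ℓ` iff `q y ∈ ℤ^ℓ`. The conditions thus split coordinatewise, and
for `d ≠ 0` the pair of conditions `y d ∈ ℤ`, `y q ∈ ℤ` means `y ∈ gcd(d, q)⁻¹ ℤ` by Bézout.
-/

section IntegerPoints

variable {m n : ℕ}

lemma mem_intLattice_iff {x : Fin n → ℝ} :
    x ∈ intLattice n ↔ ∀ i, x i ∈ (Int.castRingHom ℝ).range := by
  simp [intLattice, AddSubgroup.mem_pi, AddSubgroup.mem_zmultiples_iff, RingHom.mem_range]

lemma pT_eq_pT_iff {x y : Fin n → ℝ} : pT n x = pT n y ↔ x - y ∈ intLattice n := by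
  rw [← sub_eq_zero, ← map_sub, QuotientAddGroup.mk'_apply, QuotientAddGroup.eq_zero_iff]

lemma vecMul_map_intCast_mem_intLattice (A : Matrix (Fin m) (Fin n) ℤ) {x : Fin m → ℝ}
    (hx : x ∈ intLattice m) : x ᵥ* A.map (Int.cast : ℤ → ℝ) ∈ intLattice n := by
  rw [mem_intLattice_iff] at hx ⊢
  intro j
  simp only [vecMul, dotProduct, map_apply]
  exact Subring.sum_mem _ fun i _ => Subring.mul_mem _ (hx i) ⟨A i j, rfl⟩

lemma vecMul_map_intCast_vecMul_map_intCast_of_mul_eq_one {A B : Matrix (Fin n) (Fin n) ℤ}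
    (hAB : A * B = 1) (x : Fin n → ℝ) :
    x ᵥ* A.map (Int.cast : ℤ → ℝ) ᵥ* B.map (Int.cast : ℤ → ℝ) = x := by
  rw [vecMul_vecMul, ← map_mul_intCast, hAB, Matrix.map_one _ Int.cast_zero Int.cast_one,
    vecMul_one]

lemma vecMul_map_intCast_mem_intLattice_iff {A : Matrix (Fin n) (Fin n) ℤ}
    (hA : IsUnit A.det) {x : Fin n → ℝ} :
    x ᵥ* A.map (Int.cast : ℤ → ℝ) ∈ intLattice n ↔ x ∈ intLattice n := by
  refine ⟨fun h => ?_, vecMul_map_intCast_mem_intLattice A⟩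
  rw [← vecMul_map_intCast_vecMul_map_intCast_of_mul_eq_one (mul_nonsing_inv A hA) x]
  exact vecMul_map_intCast_mem_intLattice _ h

lemma surjective_vecMul_map_intCast {A : Matrix (Fin n) (Fin n) ℤ} (hA : IsUnit A.det) :
    Function.Surjective (· ᵥ* A.map (Int.cast : ℤ → ℝ)) := fun x =>
  ⟨_, vecMul_map_intCast_vecMul_map_intCast_of_mul_eq_one (nonsing_inv_mul A hA) x⟩

end IntegerPoints

lemma pT_vecMul_eq_self_iff {ℓ : ℕ} {R U V : Matrix (Fin ℓ) (Fin ℓ) ℤ} {d : Fin ℓ → ℤ}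
    (hV : IsUnit V.det) (hdiag : U * (R - 1) * V = diagonal d) (y : Fin ℓ → ℝ) :
    pT ℓ (y ᵥ* U.map Int.cast ᵥ* R.map Int.cast) = pT ℓ (y ᵥ* U.map Int.cast) ↔
      ∀ i, y i * d i ∈ (Int.castRingHom ℝ).range := by
  have hmove : (y ᵥ* U.map Int.cast ᵥ* R.map Int.cast - y ᵥ* U.map Int.cast) ᵥ* V.map Int.cast
      = fun i => y i * d i := by
    have hcast := congrArg (fun M => y ᵥ* M.map (Int.cast : ℤ → ℝ)) hdiag
    simp only [map_mul_intCast, Matrix.map_sub _ Int.cast_sub,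
      Matrix.map_one _ Int.cast_zero Int.cast_one, diagonal_map Int.cast_zero] at hcast
    rw [← funext (vecMul_diagonal y _), ← hcast]
    simp only [sub_vecMul, vecMul_sub, vecMul_vecMul, mul_sub, sub_mul, mul_one]
  rw [pT_eq_pT_iff, ← vecMul_map_intCast_mem_intLattice_iff hV, hmove, mem_intLattice_iff]

lemma nsmul_pT_vecMul_eq_zero_iff {ℓ : ℕ} {U : Matrix (Fin ℓ) (Fin ℓ) ℤ} (hU : IsUnit U.det)
    (q : ℕ) (y : Fin ℓ → ℝ) :
    q • pT ℓ (y ᵥ* U.map Int.cast) = 0 ↔ ∀ i, q * y i ∈ (Int.castRingHom ℝ).range := by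
  rw [← map_nsmul, ← Nat.cast_smul_eq_nsmul ℝ, ← smul_vecMul, QuotientAddGroup.mk'_apply,
    QuotientAddGroup.eq_zero_iff, vecMul_map_intCast_mem_intLattice_iff hU, mem_intLattice_iff]
  rfl

lemma mul_intCast_mem_range_iff_of_ne_zero {c : ℝ} {d : ℤ} (hd : d ≠ 0) :
    c * d ∈ (Int.castRingHom ℝ).range ↔ ∃ a : ℤ, c = a / d := by
  have hd' : (d : ℝ) ≠ 0 := Int.cast_ne_zero.mpr hd
  constructor
  · rintro ⟨a, ha⟩
    exact ⟨a, by rw [eq_div_iff hd', ← ha, eq_intCast]⟩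
  · rintro ⟨a, rfl⟩
    exact ⟨a, by rw [eq_intCast, div_mul_cancel₀ _ hd']⟩

lemma mul_mem_range_and_mul_mem_range_iff {c : ℝ} {d q : ℤ} (hdq : Int.gcd d q ≠ 0) :
    c * d ∈ (Int.castRingHom ℝ).range ∧ c * q ∈ (Int.castRingHom ℝ).range ↔
      ∃ a : ℤ, c = a / (Int.gcd d q : ℝ) := by
  have hg : (Int.gcd d q : ℝ) ≠ 0 := Nat.cast_ne_zero.mpr hdq
  have hdvd {k : ℤ} (hk : (Int.gcd d q : ℤ) ∣ k) (a : ℤ) :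
      (a : ℝ) / Int.gcd d q * k ∈ (Int.castRingHom ℝ).range := by
    obtain ⟨e, rfl⟩ := hk
    exact ⟨a * e, by rw [eq_intCast]; push_cast; field_simp⟩
  constructor
  · rintro ⟨⟨m, hm⟩, ⟨n, hn⟩⟩
    refine ⟨m * Int.gcdA d q + n * Int.gcdB d q, ?_⟩
    have hbez : (Int.gcd d q : ℝ) = d * Int.gcdA d q + q * Int.gcdB d q := by
      exact_mod_cast Int.gcd_eq_gcd_ab d q
    rw [eq_intCast] at hm hn
    rw [eq_div_iff hg, hbez]
    push_cast
    rw [hm, hn]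
    ring
  · rintro ⟨a, rfl⟩
    exact ⟨hdvd (Int.gcd_dvd_left d q) a, hdvd (Int.gcd_dvd_right d q) a⟩

lemma mul_intCast_mem_range_iff (c : ℝ) (d : ℤ) :
    c * d ∈ (Int.castRingHom ℝ).range ↔
      ∃ (a : ℤ) (b : ℝ), c = if d ≠ 0 then (a : ℝ) / d else b := by
  by_cases hd : d = 0
  · simp [hd]
  · simp [hd, mul_intCast_mem_range_iff_of_ne_zero hd]

lemma natCast_mul_mem_range_and_mul_intCast_mem_range_iff (c : ℝ) (d : ℤ) {q : ℕ}
    (hq : q ≠ 0) :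
    q * c ∈ (Int.castRingHom ℝ).range ∧ c * d ∈ (Int.castRingHom ℝ).range ↔
      ∃ a b : ℤ, c = if d ≠ 0 then (a : ℝ) / (Int.gcd d q : ℝ) else (b : ℝ) / q := by
  by_cases hd : d = 0
  · simpa [hd, mul_comm] using
      mul_intCast_mem_range_iff_of_ne_zero (c := c) (Int.natCast_ne_zero.mpr hq)
  · have key := mul_mem_range_and_mul_mem_range_iff (c := c) (Int.gcd_ne_zero_left (b := q) hd)
    rw [Int.cast_natCast, and_comm, mul_comm] at key
    simpa [hd] using key

lemma exists_and_forall_exists₂_iff {ι α β γ : Type*} (P : (ι → γ) → Prop)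
    (g : ι → α → β → γ) :
    (∃ y, P y ∧ ∀ i, ∃ a b, y i = g i a b) ↔
      ∃ (a : ι → α) (b : ι → β), P fun i => g i (a i) (b i) := by
  constructor
  · rintro ⟨y, hy, h⟩
    choose a b h using h
    exact ⟨a, b, (funext h : y = _) ▸ hy⟩
  · rintro ⟨a, b, h⟩
    exact ⟨_, h, fun i => ⟨a i, b i, rfl⟩⟩

lemma and_exists_eq_and_iff {α β : Type*} {P : β → Prop} {f : α → β} {Q : α → Prop} {t : β} :
    (P t ∧ ∃ x, t = f x ∧ Q x) ↔ ∃ x, t = f x ∧ P (f x) ∧ Q x :=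
  ⟨fun ⟨ht, x, hx, hQ⟩ => ⟨x, hx, hx ▸ ht, hQ⟩, fun ⟨x, hx, hP, hQ⟩ => ⟨hx ▸ hP, x, hx, hQ⟩⟩

lemma sum_smul_intCast_rows {ℓ : ℕ} (A : Matrix (Fin ℓ) (Fin ℓ) ℤ) (c : Fin ℓ → ℝ) :
    ∑ i, c i • (fun j => ((A i j : ℤ) : ℝ)) = c ᵥ* A.map Int.cast :=
  (vecMul_eq_sum c _).symm

theorem stmt_7_general {ℓ : ℕ} {Γ : Type*} [Group Γ]
    (ρ : Γ →* Matrix.GeneralLinearGroup (Fin ℓ) ℤ)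
    (γ : Γ)
    (U V : Matrix (Fin ℓ) (Fin ℓ) ℤ)
    (hU : U.det = 1 ∨ U.det = -1) (hV : V.det = 1 ∨ V.det = -1)
    (d : Fin ℓ → ℤ)
    (hdiag : U * ((ρ γ : Matrix (Fin ℓ) (Fin ℓ) ℤ) - 1) * V = Matrix.diagonal d)
    (q : ℕ) (hq : 0 < q) :
    ({t : Torus ℓ | ∃ x : Fin ℓ → ℝ, t = pT ℓ x ∧
        pT ℓ (x ᵥ* (((ρ γ : Matrix (Fin ℓ) (Fin ℓ) ℤ)).map (Int.cast : ℤ → ℝ))) = pT ℓ x} =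
      {t : Torus ℓ | ∃ (a : Fin ℓ → ℤ) (b : Fin ℓ → ℝ),
        t = pT ℓ (∑ i, (if d i ≠ 0 then (a i : ℝ) / (d i : ℝ) else b i) •
          (fun j => ((U i j : ℤ) : ℝ)))}) ∧
    ({t : Torus ℓ | q • t = 0 ∧ ∃ x : Fin ℓ → ℝ, t = pT ℓ x ∧
        pT ℓ (x ᵥ* (((ρ γ : Matrix (Fin ℓ) (Fin ℓ) ℤ)).map (Int.cast : ℤ → ℝ))) = pT ℓ x} =
      {t : Torus ℓ | ∃ a b : Fin ℓ → ℤ,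
        t = pT ℓ (∑ i, (if d i ≠ 0 then (a i : ℝ) / ((Int.gcd (d i) q : ℕ) : ℝ)
          else (b i : ℝ) / (q : ℝ)) • (fun j => ((U i j : ℤ) : ℝ)))}) := by
  have hUu : IsUnit U.det := Int.isUnit_iff.mpr hU
  have hsurj := surjective_vecMul_map_intCast hUu
  have hfix := pT_vecMul_eq_self_iff (Int.isUnit_iff.mpr hV) hdiag
  simp only [sum_smul_intCast_rows]
  constructor <;> ext t <;> simp only [Set.mem_ofPred_eq]
  · rw [hsurj.exists]
    simp only [hfix, mul_intCast_mem_range_iff]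
    exact exists_and_forall_exists₂_iff (fun y => t = pT ℓ (y ᵥ* U.map Int.cast)) _
  · rw [and_exists_eq_and_iff (P := (q • · = 0)) (f := pT ℓ), hsurj.exists]
    simp only [nsmul_pT_vecMul_eq_zero_iff hUu, hfix, ← forall_and,
      natCast_mul_mem_range_and_mul_intCast_mem_range_iff _ _ hq.ne']
    exact exists_and_forall_exists₂_iff (fun y => t = pT ℓ (y ᵥ* U.map Int.cast)) _

/-- Let `γ ∈ Γ` and suppose `U, V` are `ℓ×ℓ` unimodular integer matrices and
`d 1, …, d ℓ` integers with `U (R_γ − I) V = diag (d 1, …, d ℓ)`.  Then the fixed-point set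
`T^γ = {t ∈ T : ρ_T(γ) t = t}` equals
`{ Σ_{d i ≠ 0} π_T(a i • (d i)⁻¹ u i) + Σ_{d i = 0} π_T(b i • u i) : a i ∈ ℤ, b i ∈ ℝ }`,
and for every `q ∈ ℤ_{>0}` the fixed `q`-torsion points are
`T[q]^γ = { Σ_{d i ≠ 0} π_T(a i • gcd(d i, q)⁻¹ u i) + Σ_{d i = 0} π_T(b i • q⁻¹ u i)
: a i, b i ∈ ℤ }`, where `u i ∈ L` is the `i`-th row of `U`. -/
theorem stmt_7 {ℓ : ℕ} {Γ : Type*} [Group Γ] [Fintype Γ]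
    (ρ : Γ →* Matrix.GeneralLinearGroup (Fin ℓ) ℤ)
    (hρ : Function.Injective ρ)
    (γ : Γ)
    (U V : Matrix (Fin ℓ) (Fin ℓ) ℤ)
    (hU : U.det = 1 ∨ U.det = -1) (hV : V.det = 1 ∨ V.det = -1)
    (d : Fin ℓ → ℤ)
    (hdiag : U * ((ρ γ : Matrix (Fin ℓ) (Fin ℓ) ℤ) - 1) * V = Matrix.diagonal d)
    (q : ℕ) (hq : 0 < q) :
    ({t : Torus ℓ | ∃ x : Fin ℓ → ℝ, t = pT ℓ x ∧
        pT ℓ (x ᵥ* (((ρ γ : Matrix (Fin ℓ) (Fin ℓ) ℤ)).map (Int.cast : ℤ → ℝ))) = pT ℓ x} =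
      {t : Torus ℓ | ∃ (a : Fin ℓ → ℤ) (b : Fin ℓ → ℝ),
        t = pT ℓ (∑ i, (if d i ≠ 0 then (a i : ℝ) / (d i : ℝ) else b i) •
          (fun j => ((U i j : ℤ) : ℝ)))}) ∧
    ({t : Torus ℓ | q • t = 0 ∧ ∃ x : Fin ℓ → ℝ, t = pT ℓ x ∧
        pT ℓ (x ᵥ* (((ρ γ : Matrix (Fin ℓ) (Fin ℓ) ℤ)).map (Int.cast : ℤ → ℝ))) = pT ℓ x} =
      {t : Torus ℓ | ∃ a b : Fin ℓ → ℤ,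
        t = pT ℓ (∑ i, (if d i ≠ 0 then (a i : ℝ) / ((Int.gcd (d i) q : ℕ) : ℝ)
          else (b i : ℝ) / (q : ℝ)) • (fun j => ((U i j : ℤ) : ℝ)))}) :=
  stmt_7_general ρ γ U V hU hV d hdiag q hq
end

section
/- Let A be a nonempty Γ-invariant central hyperplane arrangement defined over L. For every γ ∈ Γ and q ∈ ℤ_{>0}, χ_{A,q}(γ) = Σ_{C ∈ C_T^γ} χ_{C,q}(γ), where C_T^γ := {C ∈ C_T : ρ_T(γ)(C) = C} and χ_{C,q}(γ) := #{t ∈ C ∩ T[q] : ρ_T(γ)(t) = t}. -/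
/-! The points of `T[q]` are the images `π_T(m/q)` of the integer vectors `m`, and `π_T(m/q)`
depends only on `m mod q`; this identifies `L_q` with `T[q]`. Under this identification `M(A;q)`
becomes `T(A) ∩ T[q]` and `ρ_q(γ)` becomes `ρ_T(γ)`, so `χ_{A,q}(γ)` counts the `ρ_T(γ)`-fixed
points of `T(A) ∩ T[q]`. Sorting them by the component of `T(A)` containing them gives the sum;
only components in `C_T^γ` contribute, because `ρ_T(γ)` is a homeomorphism of `T` preserving
`T(A)`, so it maps the component of a fixed point onto itself. -/

open Matrix

def Maff {ℓ n : ℕ} (α : Fin n → Fin ℓ → ℤ) : Set (Fin ℓ → ℝ) :=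
  {x | ∀ (i : Fin n) (k : ℤ), x ⬝ᵥ (fun j => ((α i j : ℤ) : ℝ)) ≠ (k : ℝ)}

def TA {ℓ n : ℕ} (α : Fin n → Fin ℓ → ℤ) : Set (Torus ℓ) := pT ℓ '' Maff α

def IsChamberT {ℓ n : ℕ} (α : Fin n → Fin ℓ → ℤ) (C : Set (Torus ℓ)) : Prop :=
  ∃ t ∈ TA α, C = connectedComponentIn (TA α) t

def tAct {ℓ : ℕ} (R : Matrix (Fin ℓ) (Fin ℓ) ℝ) (C : Set (Torus ℓ)) : Set (Torus ℓ) :=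
  pT ℓ '' ((fun x => x ᵥ* R) '' (pT ℓ ⁻¹' C))

def realMat {ℓ : ℕ} {Γ : Type*} [Group Γ]
    (ρ : Γ →* Matrix.GeneralLinearGroup (Fin ℓ) ℤ) (γ : Γ) : Matrix (Fin ℓ) (Fin ℓ) ℝ :=
  ((ρ γ : Matrix (Fin ℓ) (Fin ℓ) ℤ)).map (Int.cast : ℤ → ℝ)

open Set Function

section IntCast

variable {ι κ R : Type*} [Ring R]

theorem intCast_comp_dotProduct [Fintype ι] (v w : ι → ℤ) :
    ((v ⬝ᵥ w : ℤ) : R) = (Int.cast ∘ v : ι → R) ⬝ᵥ (Int.cast ∘ w) :=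
  (Int.castRingHom R).map_dotProduct v w

theorem intCast_comp_vecMul [Fintype ι] (v : ι → ℤ) (M : Matrix ι κ ℤ) :
    (Int.cast ∘ (v ᵥ* M) : κ → R) = (Int.cast ∘ v) ᵥ* M.map Int.cast :=
  funext <| (Int.castRingHom R).map_vecMul M v

theorem intCast_comp_mulVec [Fintype κ] (M : Matrix ι κ ℤ) (v : κ → ℤ) :
    (Int.cast ∘ (M *ᵥ v) : ι → R) = M.map Int.cast *ᵥ (Int.cast ∘ v) :=
  funext <| (Int.castRingHom R).map_mulVec M v

end IntCast

section Lattice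

variable {ℓ : ℕ}

theorem mem_intLattice_iff_s12 {x : Fin ℓ → ℝ} :
    x ∈ intLattice ℓ ↔ ∃ m : Fin ℓ → ℤ, Int.cast ∘ m = x := by
  simp only [intLattice, AddSubgroup.mem_pi, mem_univ, true_implies,
    AddSubgroup.mem_zmultiples_iff, zsmul_eq_mul, mul_one, funext_iff, Function.comp_apply]
  exact Classical.skolem

end Lattice

namespace Torus

variable {ℓ : ℕ}

noncomputable def map (M : Matrix (Fin ℓ) (Fin ℓ) ℤ) : Torus ℓ →+ Torus ℓ :=
  QuotientAddGroup.map _ _ (M.map (Int.cast : ℤ → ℝ)).vecMulLinear.toAddMonoidHom <| by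
    intro x hx
    obtain ⟨m, rfl⟩ := mem_intLattice_iff_s12.mp hx
    exact mem_intLattice_iff_s12.mpr ⟨m ᵥ* M, intCast_comp_vecMul m M⟩

theorem map_mk (M : Matrix (Fin ℓ) (Fin ℓ) ℤ) (x : Fin ℓ → ℝ) :
    Torus.map M (pT ℓ x) = pT ℓ (x ᵥ* M.map Int.cast) :=
  rfl

theorem map_map (M N : Matrix (Fin ℓ) (Fin ℓ) ℤ) (t : Torus ℓ) :
    Torus.map N (Torus.map M t) = Torus.map (M * N) t := by
  obtain ⟨x, rfl⟩ := QuotientAddGroup.mk'_surjective (intLattice ℓ) t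
  rw [map_mk, map_mk, map_mk, vecMul_vecMul]
  exact congrArg _ (congrArg _ (Matrix.map_mul (f := Int.castRingHom ℝ)).symm)

theorem map_one (t : Torus ℓ) : Torus.map 1 t = t := by
  obtain ⟨x, rfl⟩ := QuotientAddGroup.mk'_surjective (intLattice ℓ) t
  rw [map_mk]
  simp

theorem continuous_map (M : Matrix (Fin ℓ) (Fin ℓ) ℤ) : Continuous (Torus.map M) :=
  (QuotientAddGroup.isQuotientMap_mk (intLattice ℓ)).continuous_iff.mpr <|
    QuotientAddGroup.continuous_mk.comp
      (LinearMap.continuous_on_pi (M.map (Int.cast : ℤ → ℝ)).vecMulLinear)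

noncomputable def homeomorph (M : Matrix.GeneralLinearGroup (Fin ℓ) ℤ) :
    Torus ℓ ≃ₜ Torus ℓ where
  toFun := Torus.map M
  invFun := Torus.map ↑M⁻¹
  left_inv t := by rw [map_map, M.mul_inv, map_one]
  right_inv t := by rw [map_map, M.inv_mul, map_one]
  continuous_toFun := continuous_map _
  continuous_invFun := continuous_map _

end Torus

section Action

variable {ℓ : ℕ}

theorem tAct_map_intCast (M : Matrix (Fin ℓ) (Fin ℓ) ℤ) (C : Set (Torus ℓ)) :
    tAct (M.map Int.cast) C = Torus.map M '' C := by
  rw [tAct, image_image]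
  change (fun x => Torus.map M (pT ℓ x)) '' _ = _
  rw [← image_image (Torus.map M) (pT ℓ), image_preimage_eq C (QuotientAddGroup.mk'_surjective _)]

theorem exists_pT_vecMul_eq_iff (M : Matrix (Fin ℓ) (Fin ℓ) ℤ) (t : Torus ℓ) :
    (∃ x, t = pT ℓ x ∧ pT ℓ (x ᵥ* M.map Int.cast) = t) ↔ Torus.map M t = t := by
  constructor
  · rintro ⟨x, rfl, hx⟩
    exact hx
  · intro h
    obtain ⟨x, rfl⟩ := QuotientAddGroup.mk'_surjective (intLattice ℓ) t
    exact ⟨x, rfl, h⟩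

end Action

section Arrangement

variable {ℓ n : ℕ} {α : Fin n → Fin ℓ → ℤ}

def PreservesArrangement (M : Matrix (Fin ℓ) (Fin ℓ) ℤ) (α : Fin n → Fin ℓ → ℤ) : Prop :=
  ∀ i, ∃ j, M *ᵥ α i = α j ∨ M *ᵥ α i = -α j

theorem add_intCast_mem_Maff {y : Fin ℓ → ℝ} (hy : y ∈ Maff α) (m : Fin ℓ → ℤ) :
    y + Int.cast ∘ m ∈ Maff α := by
  intro i k hk
  apply hy i (k - m ⬝ᵥ α i)
  rw [add_dotProduct] at hk
  change _ + _ ⬝ᵥ (Int.cast ∘ α i) = _ at hk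
  rw [← intCast_comp_dotProduct] at hk
  push_cast
  linarith

theorem mem_TA_iff {y : Fin ℓ → ℝ} : pT ℓ y ∈ TA α ↔ y ∈ Maff α := by
  refine ⟨?_, mem_image_of_mem _⟩
  rintro ⟨x, hx, hxy⟩
  obtain ⟨m, hm⟩ := mem_intLattice_iff_s12.mp (QuotientAddGroup.eq.mp hxy)
  rw [show y = x + Int.cast ∘ m by rw [hm]; abel]
  exact add_intCast_mem_Maff hx m

theorem vecMul_mem_Maff {M : Matrix (Fin ℓ) (Fin ℓ) ℤ} (hM : PreservesArrangement M α)
    {y : Fin ℓ → ℝ} (hy : y ∈ Maff α) : y ᵥ* M.map Int.cast ∈ Maff α := by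
  intro i k hk
  change _ ⬝ᵥ (Int.cast ∘ α i) = _ at hk
  rw [← dotProduct_mulVec, ← intCast_comp_mulVec] at hk
  obtain ⟨j, hj | hj⟩ := hM i
  · exact hy j k (by rwa [hj] at hk)
  · apply hy j (-k)
    have hneg : (Int.cast ∘ (-α j) : Fin ℓ → ℝ) = -(Int.cast ∘ α j) :=
      funext fun _ => Int.cast_neg _
    rw [hj, hneg, dotProduct_neg] at hk
    change y ⬝ᵥ (Int.cast ∘ α j) = _
    push_cast
    linarith

theorem mapsTo_map_TA {M : Matrix (Fin ℓ) (Fin ℓ) ℤ} (hM : PreservesArrangement M α) :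
    MapsTo (Torus.map M) (TA α) (TA α) := by
  rintro _ ⟨y, hy, rfl⟩
  exact mem_TA_iff.mpr (vecMul_mem_Maff hM hy)

theorem image_homeomorph_TA {M : Matrix.GeneralLinearGroup (Fin ℓ) ℤ}
    (hM : PreservesArrangement ↑M α) (hM' : PreservesArrangement ↑M⁻¹ α) :
    Torus.homeomorph M '' TA α = TA α :=
  (mapsTo_map_TA hM).image_subset.antisymm fun t ht =>
    ⟨_, mapsTo_map_TA hM' ht, (Torus.homeomorph M).apply_symm_apply t⟩

theorem map_image_connectedComponentIn_TA {M : Matrix.GeneralLinearGroup (Fin ℓ) ℤ}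
    (hM : PreservesArrangement ↑M α) (hM' : PreservesArrangement ↑M⁻¹ α) {t : Torus ℓ}
    (ht : t ∈ TA α) (hfix : Torus.map M t = t) :
    Torus.map M '' connectedComponentIn (TA α) t = connectedComponentIn (TA α) t := by
  have := (Torus.homeomorph M).image_connectedComponentIn ht
  rwa [image_homeomorph_TA hM hM', show Torus.homeomorph M t = t from hfix] at this

end Arrangement

section Torsion

variable {ℓ n q : ℕ}

noncomputable def fracPoint (q : ℕ) (m : Fin ℓ → ℤ) : Fin ℓ → ℝ := (q : ℝ)⁻¹ • (Int.cast ∘ m)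

theorem fracPoint_vecMul (m : Fin ℓ → ℤ) (M : Matrix (Fin ℓ) (Fin ℓ) ℤ) :
    fracPoint q m ᵥ* M.map Int.cast = fracPoint q (m ᵥ* M) := by
  rw [fracPoint, fracPoint, smul_vecMul, intCast_comp_vecMul]

variable [NeZero q]

theorem pT_fracPoint_eq_iff {a b : Fin ℓ → ℤ} :
    pT ℓ (fracPoint q a) = pT ℓ (fracPoint q b) ↔
      (Int.cast ∘ a : Fin ℓ → ZMod q) = Int.cast ∘ b := by
  have hq : (q : ℝ) ≠ 0 := NeZero.ne _
  have key (j : Fin ℓ) (c : ℤ) :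
      (c : ℝ) = -((q : ℝ)⁻¹ * a j) + (q : ℝ)⁻¹ * b j ↔ b j - a j = q * c := by
    rw [← mul_neg, ← mul_add, eq_inv_mul_iff_mul_eq₀ hq, neg_add_eq_sub, eq_comm]
    norm_cast
  simp only [pT, QuotientAddGroup.mk'_apply, QuotientAddGroup.eq, mem_intLattice_iff_s12, funext_iff,
    Function.comp_apply, ZMod.intCast_eq_intCast_iff_dvd_sub, Pi.add_apply, Pi.neg_apply,
    fracPoint, Pi.smul_apply, smul_eq_mul, dvd_def, key]
  exact ⟨fun ⟨m, hm⟩ j => ⟨m j, hm j⟩, Classical.skolem.mp⟩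

theorem nsmul_pT_fracPoint (m : Fin ℓ → ℤ) : q • pT ℓ (fracPoint q m) = 0 := by
  have hq : (q : ℝ) ≠ 0 := NeZero.ne _
  rw [← map_nsmul, QuotientAddGroup.mk'_apply, QuotientAddGroup.eq_zero_iff, fracPoint,
    ← Nat.cast_smul_eq_nsmul ℝ, smul_inv_smul₀ hq]
  exact mem_intLattice_iff_s12.mpr ⟨m, rfl⟩

theorem exists_pT_fracPoint_eq {t : Torus ℓ} (ht : q • t = 0) : ∃ m, pT ℓ (fracPoint q m) = t := by
  have hq : (q : ℝ) ≠ 0 := NeZero.ne _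
  obtain ⟨y, rfl⟩ := QuotientAddGroup.mk'_surjective (intLattice ℓ) t
  rw [← map_nsmul, QuotientAddGroup.mk'_apply, QuotientAddGroup.eq_zero_iff] at ht
  obtain ⟨m, hm⟩ := mem_intLattice_iff_s12.mp ht
  refine ⟨m, congrArg _ ?_⟩
  rw [fracPoint, hm, ← Nat.cast_smul_eq_nsmul ℝ, inv_smul_smul₀ hq]

theorem fracPoint_mem_Maff_iff {α : Fin n → Fin ℓ → ℤ} {m : Fin ℓ → ℤ} :
    fracPoint q m ∈ Maff α ↔ ∀ i, ((m ⬝ᵥ α i : ℤ) : ZMod q) ≠ 0 := by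
  have hq : (q : ℝ) ≠ 0 := NeZero.ne _
  simp only [Maff, mem_ofPred_eq, Ne, ZMod.intCast_zmod_eq_zero_iff_dvd, dvd_def, not_exists]
  refine forall_congr' fun i => forall_congr' fun k => not_congr ?_
  change fracPoint q m ⬝ᵥ (Int.cast ∘ α i) = _ ↔ _
  rw [fracPoint, smul_dotProduct, ← intCast_comp_dotProduct, smul_eq_mul, inv_mul_eq_iff_eq_mul₀ hq]
  norm_cast

theorem intCast_comp_val (x : Fin ℓ → ZMod q) : (Int.cast ∘ fun j => ((x j).val : ℤ)) = x :=
  funext fun j => by simp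

noncomputable def torsionPoint (q : ℕ) (x : Fin ℓ → ZMod q) : Torus ℓ :=
  pT ℓ (fracPoint q fun j => ((x j).val : ℤ))

theorem torsionPoint_intCast (m : Fin ℓ → ℤ) :
    torsionPoint q (Int.cast ∘ m) = pT ℓ (fracPoint q m) :=
  pT_fracPoint_eq_iff.mpr (intCast_comp_val _)

theorem torsionPoint_injective : Injective (torsionPoint (ℓ := ℓ) q) := by
  intro x y h
  simpa only [intCast_comp_val] using pT_fracPoint_eq_iff.mp h

theorem range_torsionPoint : range (torsionPoint (ℓ := ℓ) q) = {t | q • t = 0} := by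
  ext t
  refine ⟨?_, fun ht => ?_⟩
  · rintro ⟨x, rfl⟩
    exact nsmul_pT_fracPoint _
  · obtain ⟨m, rfl⟩ := exists_pT_fracPoint_eq ht
    exact ⟨_, torsionPoint_intCast m⟩

theorem torsionPoint_mem_TA_iff {α : Fin n → Fin ℓ → ℤ} {x : Fin ℓ → ZMod q} :
    torsionPoint q x ∈ TA α ↔ ∀ i, x ⬝ᵥ (fun j => (α i j : ZMod q)) ≠ 0 := by
  rw [torsionPoint, mem_TA_iff, fracPoint_mem_Maff_iff]
  simp only [intCast_comp_dotProduct, intCast_comp_val]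
  rfl

theorem map_torsionPoint (M : Matrix (Fin ℓ) (Fin ℓ) ℤ) (x : Fin ℓ → ZMod q) :
    Torus.map M (torsionPoint q x) = torsionPoint q (x ᵥ* M.map Int.cast) := by
  rw [torsionPoint, Torus.map_mk, fracPoint_vecMul, ← torsionPoint_intCast, intCast_comp_vecMul,
    intCast_comp_val]

end Torsion

section Counting

variable {ℓ n q : ℕ}

def fixedTorsionPoints (α : Fin n → Fin ℓ → ℤ) (M : Matrix (Fin ℓ) (Fin ℓ) ℤ) (q : ℕ) :
    Set (Torus ℓ) :=
  {t | t ∈ TA α ∧ q • t = 0 ∧ Torus.map M t = t}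

theorem ncard_fixedTorsionPoints_inter {α : Fin n → Fin ℓ → ℤ} {M : Matrix (Fin ℓ) (Fin ℓ) ℤ}
    {C : Set (Torus ℓ)} (hC : C ⊆ TA α) :
    (fixedTorsionPoints α M q ∩ C).ncard = Nat.card {t : Torus ℓ // t ∈ C ∧ q • t = 0 ∧
      ∃ x, t = pT ℓ x ∧ pT ℓ (x ᵥ* M.map Int.cast) = t} := by
  rw [← Nat.card_coe_set_eq]
  refine Nat.card_congr (Equiv.subtypeEquivRight fun t => ?_)
  rw [exists_pT_vecMul_eq_iff]
  exact ⟨fun ⟨⟨_, htors, hfix⟩, htC⟩ => ⟨htC, htors, hfix⟩,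
    fun ⟨htC, htors, hfix⟩ => ⟨⟨hC htC, htors, hfix⟩, htC⟩⟩

variable [NeZero q]

theorem fixedTorsionPoints_eq_image (α : Fin n → Fin ℓ → ℤ) (M : Matrix (Fin ℓ) (Fin ℓ) ℤ) :
    fixedTorsionPoints α M q = torsionPoint q ''
      {x | (∀ i, x ⬝ᵥ (fun j => (α i j : ZMod q)) ≠ 0) ∧ x ᵥ* M.map Int.cast = x} := by
  ext t
  constructor
  · rintro ⟨hA, htors, hfix⟩
    obtain ⟨x, rfl⟩ : t ∈ range (torsionPoint q) := range_torsionPoint (q := q).symm ▸ htors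
    rw [map_torsionPoint] at hfix
    exact ⟨x, ⟨torsionPoint_mem_TA_iff.mp hA, torsionPoint_injective hfix⟩, rfl⟩
  · rintro ⟨x, ⟨hA, hfix⟩, rfl⟩
    exact ⟨torsionPoint_mem_TA_iff.mpr hA, nsmul_pT_fracPoint _, by rw [map_torsionPoint, hfix]⟩

theorem finite_fixedTorsionPoints (α : Fin n → Fin ℓ → ℤ) (M : Matrix (Fin ℓ) (Fin ℓ) ℤ) :
    (fixedTorsionPoints α M q).Finite :=
  fixedTorsionPoints_eq_image (q := q) α M ▸ toFinite _

theorem ncard_fixedTorsionPoints (α : Fin n → Fin ℓ → ℤ) (M : Matrix (Fin ℓ) (Fin ℓ) ℤ) :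
    (fixedTorsionPoints α M q).ncard = Nat.card {x : Fin ℓ → ZMod q //
      (∀ i, x ⬝ᵥ (fun j => (α i j : ZMod q)) ≠ 0) ∧ x ᵥ* M.map Int.cast = x} := by
  rw [fixedTorsionPoints_eq_image, ncard_image_of_injective _ torsionPoint_injective,
    ← Nat.card_coe_set_eq]
  rfl

end Counting

section Fibers

variable {α β : Type*}

theorem finsum_mem_ncard_inter_preimage {f : α → β} {s : Set α} (hs : s.Finite) {t : Set β}
    (h : MapsTo f s t) : ∑ᶠ b ∈ t, (s ∩ f ⁻¹' {b}).ncard = s.ncard := by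
  classical
  obtain ⟨F, rfl⟩ := hs.exists_finset_coe
  have hsupp : t ∩ support (fun b => ((F : Set α) ∩ f ⁻¹' {b}).ncard) ⊆ F.image f := by
    rintro b ⟨-, hb⟩
    obtain ⟨a, ha, rfl⟩ := nonempty_of_ncard_ne_zero hb
    exact Finset.mem_image_of_mem f ha
  rw [finsum_mem_eq_sum_of_subset _ hsupp (by simpa using h.image_subset), ncard_coe_finset,
    Finset.card_eq_sum_card_image f F]
  refine Finset.sum_congr rfl fun b _ => ?_
  rw [← ncard_coe_finset, Finset.coe_filter]
  rfl

theorem finsum_mem_ncard_inter_connectedComponentIn [TopologicalSpace α] {U S : Set α}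
    (hS : S.Finite) (hSU : S ⊆ U) {𝒞 : Set (Set α)}
    (h𝒞 : ∀ C ∈ 𝒞, ∃ t ∈ U, C = connectedComponentIn U t)
    (hmaps : MapsTo (connectedComponentIn U) S 𝒞) :
    ∑ᶠ C ∈ 𝒞, (S ∩ C).ncard = S.ncard := by
  rw [← finsum_mem_ncard_inter_preimage hS hmaps]
  refine finsum_mem_congr rfl fun C hC => congrArg ncard ?_
  obtain ⟨t, -, rfl⟩ := h𝒞 C hC
  ext u
  simp only [mem_inter_iff, mem_preimage, mem_singleton_iff, and_congr_right_iff]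
  intro hu
  exact ⟨fun h => (connectedComponentIn_eq h).symm, fun h => h ▸ mem_connectedComponentIn (hSU hu)⟩

end Fibers

theorem stmt_12_general {ℓ n : ℕ} {Γ : Type*} [Group Γ]
    (ρ : Γ →* Matrix.GeneralLinearGroup (Fin ℓ) ℤ)
    (α : Fin n → Fin ℓ → ℤ)
    (hinv : ∀ (γ : Γ) (i : Fin n), ∃ j : Fin n,
      ((↑(ρ γ)⁻¹ : Matrix (Fin ℓ) (Fin ℓ) ℤ) *ᵥ α i = α j) ∨
      ((↑(ρ γ)⁻¹ : Matrix (Fin ℓ) (Fin ℓ) ℤ) *ᵥ α i = -α j))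
    (q : ℕ) (hq : 0 < q) (γ : Γ) :
    Nat.card {x : Fin ℓ → ZMod q //
        (∀ i : Fin n, x ⬝ᵥ (fun j => ((α i j : ℤ) : ZMod q)) ≠ 0) ∧
        x ᵥ* (((ρ γ : Matrix (Fin ℓ) (Fin ℓ) ℤ)).map (Int.cast : ℤ → ZMod q)) = x} =
      ∑ᶠ C ∈ {C : Set (Torus ℓ) | IsChamberT α C ∧ tAct (realMat ρ γ) C = C},
        Nat.card {t : Torus ℓ // t ∈ C ∧ q • t = 0 ∧
          ∃ x : Fin ℓ → ℝ, t = pT ℓ x ∧ pT ℓ (x ᵥ* realMat ρ γ) = t} := by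
  have : NeZero q := ⟨hq.ne'⟩
  have hM : PreservesArrangement ↑(ρ γ) α := fun i => by
    simpa only [map_inv, inv_inv] using hinv γ⁻¹ i
  rw [← ncard_fixedTorsionPoints, ← finsum_mem_ncard_inter_connectedComponentIn
    (finite_fixedTorsionPoints α _) (fun t ht => ht.1) (fun C (hC : IsChamberT α C ∧ _) => hC.1)]
  · refine finsum_mem_congr rfl fun C ⟨⟨t, _, hC⟩, _⟩ => ?_
    exact ncard_fixedTorsionPoints_inter (hC ▸ connectedComponentIn_subset _ _)
  · intro t ht
    refine ⟨⟨t, ht.1, rfl⟩, ?_⟩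
    rw [realMat, tAct_map_intCast, map_image_connectedComponentIn_TA hM (hinv γ) ht.1 ht.2.2]

/-- Let `A` be a nonempty `Γ`-invariant central hyperplane arrangement over
`L = ℤ^ℓ`.  For every `γ ∈ Γ` and `q ∈ ℤ_{>0}`,
`χ_{A,q}(γ) = Σ_{C ∈ C_T^γ} χ_{C,q}(γ)`, where `C_T^γ` is the set of components of `T(A)`
fixed (setwise) by `ρ_T(γ)` and `χ_{C,q}(γ) = #{t ∈ C ∩ T[q] : ρ_T(γ) t = t}`. -/
theorem stmt_12 {ℓ n : ℕ} (hn : 0 < n) {Γ : Type*} [Group Γ] [Fintype Γ]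
    (ρ : Γ →* Matrix.GeneralLinearGroup (Fin ℓ) ℤ)
    (hρ : Function.Injective ρ)
    (α : Fin n → Fin ℓ → ℤ)
    (hinv : ∀ (γ : Γ) (i : Fin n), ∃ j : Fin n,
      ((↑(ρ γ)⁻¹ : Matrix (Fin ℓ) (Fin ℓ) ℤ) *ᵥ α i = α j) ∨
      ((↑(ρ γ)⁻¹ : Matrix (Fin ℓ) (Fin ℓ) ℤ) *ᵥ α i = -α j))
    (q : ℕ) (hq : 0 < q) (γ : Γ) :
    Nat.card {x : Fin ℓ → ZMod q //
        (∀ i : Fin n, x ⬝ᵥ (fun j => ((α i j : ℤ) : ZMod q)) ≠ 0) ∧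
        x ᵥ* (((ρ γ : Matrix (Fin ℓ) (Fin ℓ) ℤ)).map (Int.cast : ℤ → ZMod q)) = x} =
      ∑ᶠ C ∈ {C : Set (Torus ℓ) | IsChamberT α C ∧ tAct (realMat ρ γ) C = C},
        Nat.card {t : Torus ℓ // t ∈ C ∧ q • t = 0 ∧
          ∃ x : Fin ℓ → ℝ, t = pT ℓ x ∧ pT ℓ (x ᵥ* realMat ρ γ) = t} :=
  stmt_12_general ρ α hinv q hq γ
end

section
/- Let A be a nonempty Γ-invariant central hyperplane arrangement defined over L. For every q ∈ ℤ_{>0}, χ_{A,q} = Σ_{C ∈ C_T} (1/#Γ(C)) · Ind_{Γ_C}^Γ χ_{C,q} = Σ_{i=1}^k Ind_{Γ_{C_i}}^Γ χ_{C_i,q}, where {C_1, …, C_k} is a set of representatives of the Γ-orbits of C_T. -/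
open Matrix

/-- `χ_{C,q}(γ)`: the number of points of `C ∩ T[q]` fixed by the transformation of the torus
induced by `ρ(γ)`. -/
noncomputable def chamberChar {ℓ : ℕ} {Γ : Type*} [Group Γ]
    (ρ : Γ →* Matrix.GeneralLinearGroup (Fin ℓ) ℤ)
    (C : Set (Torus ℓ)) (q : ℕ) (γ : Γ) : ℕ :=
  Nat.card {t : Torus ℓ // t ∈ C ∧ q • t = 0 ∧
    ∃ x : Fin ℓ → ℝ, t = pT ℓ x ∧ pT ℓ (x ᵥ* realMat ρ γ) = t}

/-- The value at `γ` of the induced character `Ind_{Γ_C}^Γ χ_{C,q}`, where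
`Γ_C = {δ : ρ_T(δ)(C) = C}` is the isotropy subgroup of the chamber `C`:
`(Ind_{Γ_C}^Γ χ_{C,q})(γ) = (1/#Γ_C) Σ_{σ ∈ Γ, σ⁻¹γσ ∈ Γ_C} χ_{C,q}(σ⁻¹γσ)`. -/
noncomputable def indCharVal {ℓ : ℕ} {Γ : Type*} [Group Γ] [Fintype Γ]
    (ρ : Γ →* Matrix.GeneralLinearGroup (Fin ℓ) ℤ)
    (C : Set (Torus ℓ)) (q : ℕ) (γ : Γ) : ℂ :=
  ((Nat.card {δ : Γ // tAct (realMat ρ δ) C = C} : ℂ))⁻¹ *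
    ∑ᶠ σ : {σ : Γ // tAct (realMat ρ (σ⁻¹ * γ * σ)) C = C},
      (chamberChar ρ C q ((σ : Γ)⁻¹ * γ * (σ : Γ)) : ℂ)

/-!
Multiplication by `1/q` identifies `M(A;q)` with `T(A) ∩ T[q]` compatibly with the actions of `Γ`,
so `χ_{A,q}(γ)` counts the `γ`-fixed points of `T(A) ∩ T[q]`; sorting them by the chamber they lie
in gives `Σ_C χ_{C,q}(γ)`. Since `Γ` acts by homeomorphisms preserving `T(A)`, it permutes the
chambers, so each chamber is a block: an element moving a chamber has no fixed point in it. Hence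
`Ind_{Γ_C}^Γ χ_{C,q} = Σ_{D ∈ Γ(C)} χ_{D,q}`, and both formulas follow by regrouping the sum over
chambers along `Γ`-orbits. There are finitely many chambers because points of `M(A^aff)` in the
same alcove `{k_i < α_i < k_i + 1}` lie in the same chamber, and only finitely many alcoves meet
the cube `[0,1)^ℓ`.
-/

theorem exists_intCast_eq_div_natCast_iff {q : ℕ} (hq : q ≠ 0) (a : ℤ) :
    (∃ c : ℤ, (c : ℝ) = a / q) ↔ (q : ℤ) ∣ a := by
  have hqR : (q : ℝ) ≠ 0 := Nat.cast_ne_zero.2 hq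
  refine ⟨fun ⟨c, hc⟩ => ⟨c, ?_⟩, fun ⟨c, hc⟩ => ⟨c, ?_⟩⟩
  · rw [eq_div_iff hqR] at hc
    exact_mod_cast hc.symm.trans (mul_comm _ _)
  · rw [hc]; push_cast; field_simp

namespace MulAction

open scoped Pointwise Function

variable {G X : Type*} [Group G] [MulAction G X]

theorem natCard_smul_inter_fixedBy {F : Set X} (hF : ∀ g : G, g • F = F) (σ g : G) (B : Set X) :
    Nat.card ↥(σ • B ∩ F ∩ fixedBy X g) = Nat.card ↥(B ∩ F ∩ fixedBy X (σ⁻¹ * g * σ)) := by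
  rw [← Set.natCard_smul_set σ (B ∩ F ∩ _), Set.smul_set_inter, Set.smul_set_inter, hF,
    smul_fixedBy]
  group

theorem IsBlock.inter_fixedBy_eq_empty {B : Set X} (hB : IsBlock G B) {g : G}
    (hg : g ∉ stabilizer G B) (F : Set X) : B ∩ F ∩ fixedBy X g = ∅ := by
  refine Set.eq_empty_of_forall_notMem fun x ⟨⟨hxB, _⟩, hx⟩ => hg ?_
  exact hB.smul_eq_of_mem hxB (by rwa [mem_fixedBy.mp hx])

theorem sum_smul_eq_natCard_stabilizer_nsmul [Fintype G] {M : Type*} [AddCommMonoid M]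
    (f : X → M) (x : X) :
    ∑ σ : G, f (σ • x) = Nat.card (stabilizer G x) • ∑ᶠ y ∈ orbit G x, f y := by
  classical
  have hfin : (orbit G x).Finite := Set.finite_range _
  rw [finsum_mem_eq_finite_toFinset_sum _ hfin, Finset.smul_sum,
    ← Finset.sum_fiberwise_of_maps_to (g := (· • x)) (t := hfin.toFinset)
      (fun σ _ => by simp [mem_orbit])]
  refine Finset.sum_congr rfl fun y hy => ?_
  obtain ⟨τ, rfl⟩ := (hfin.mem_toFinset).1 hy
  have hfiber : (Finset.univ.filter fun σ : G => σ • x = τ • x).card =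
      Nat.card (stabilizer G x) := by
    rw [Nat.card_eq_fintype_card, Fintype.card_subtype]
    refine Finset.card_nbij' (τ⁻¹ * ·) (τ * ·) (fun σ hσ => ?_) (fun σ hσ => ?_)
      (fun σ _ => by simp) (fun σ _ => by simp)
    · simp_all [mul_smul]
    · simp_all [mul_smul, mem_stabilizer_iff]
  rw [Finset.sum_congr rfl fun σ hσ => by rw [(Finset.mem_filter.1 hσ).2], Finset.sum_const,
    hfiber]

theorem IsBlock.finsum_natCard_fixedBy_conj [Fintype G] {R : Type*} [AddCommMonoidWithOne R]
    {B F : Set X} (hB : IsBlock G B) (hF : ∀ g : G, g • F = F) (γ : G) :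
    ∑ᶠ (σ : G) (_ : σ⁻¹ * γ * σ ∈ stabilizer G B),
        (Nat.card ↥(B ∩ F ∩ fixedBy X (σ⁻¹ * γ * σ)) : R) =
      Nat.card (stabilizer G B) • ∑ᶠ D ∈ orbit G B, (Nat.card ↥(D ∩ F ∩ fixedBy X γ) : R) := by
  have hterm : ∀ σ : G, ∑ᶠ (_ : σ⁻¹ * γ * σ ∈ stabilizer G B),
      (Nat.card ↥(B ∩ F ∩ fixedBy X (σ⁻¹ * γ * σ)) : R) =
        Nat.card ↥(σ • B ∩ F ∩ fixedBy X γ) := fun σ => by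
    rw [finsum_eq_if, natCard_smul_inter_fixedBy hF]
    split_ifs with hσ
    · rfl
    · rw [hB.inter_fixedBy_eq_empty hσ F, Nat.card_of_isEmpty, Nat.cast_zero]
  rw [finsum_congr hterm, finsum_eq_sum_of_fintype,
    ← sum_smul_eq_natCard_stabilizer_nsmul fun D => (Nat.card ↥(D ∩ F ∩ fixedBy X γ) : R)]

theorem finsum_mem_inv_natCard_orbit_mul [Fintype G] {K : Type*} [Field K] [CharZero K]
    {s : Set X} (hs : s.Finite) (hGs : ∀ g : G, ∀ x ∈ s, g • x ∈ s) (f : X → K) :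
    ∑ᶠ x ∈ s, (Nat.card (orbit G x) : K)⁻¹ * ∑ᶠ y ∈ orbit G x, f y = ∑ᶠ x ∈ s, f x := by
  have horbit : ∀ x : X, (Nat.card (orbit G x) : K)⁻¹ * ∑ᶠ y ∈ orbit G x, f y =
      (Nat.card G : K)⁻¹ * ∑ σ : G, f (σ • x) := fun x => by
    have hstab : (Nat.card (stabilizer G x) : K) ≠ 0 := Nat.cast_ne_zero.2 Nat.card_pos.ne'
    have hcard : Nat.card (orbit G x) * Nat.card (stabilizer G x) = Nat.card G := by
      rw [Nat.card_coe_set_eq, ← index_stabilizer, mul_comm, Subgroup.card_mul_index]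
    rw [sum_smul_eq_natCard_stabilizer_nsmul, nsmul_eq_mul, ← hcard, Nat.cast_mul, mul_inv,
      mul_assoc, inv_mul_cancel_left₀ hstab]
  have hperm : ∀ σ : G, ∑ x ∈ hs.toFinset, f (σ • x) = ∑ x ∈ hs.toFinset, f x := fun σ =>
    Finset.sum_nbij' (σ • ·) (σ⁻¹ • ·) (fun x hx => by simpa using hGs σ x (by simpa using hx))
      (fun x hx => by simpa using hGs σ⁻¹ x (by simpa using hx)) (fun x _ => by simp)
      (fun x _ => by simp) fun x _ => rfl
  have hG : (Nat.card G : K) ≠ 0 := Nat.cast_ne_zero.2 Nat.card_pos.ne'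
  simp_rw [horbit, finsum_mem_eq_finite_toFinset_sum _ hs, ← Finset.mul_sum]
  rw [Finset.sum_comm, Finset.sum_congr rfl fun σ _ => hperm σ, Finset.sum_const,
    Finset.card_univ, ← Nat.card_eq_fintype_card, nsmul_eq_mul, inv_mul_cancel_left₀ hG]

theorem sum_finsum_mem_orbit_of_existsUnique [Finite G] {ι M : Type*} [Fintype ι]
    [AddCommMonoid M] {s : Set X} (hGs : ∀ g : G, ∀ x ∈ s, g • x ∈ s) {r : ι → X}
    (hr : ∀ i, r i ∈ s) (hrep : ∀ x ∈ s, ∃! i, x ∈ orbit G (r i)) (f : X → M) :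
    ∑ i, ∑ᶠ y ∈ orbit G (r i), f y = ∑ᶠ x ∈ s, f x := by
  have horbit_subset : ∀ i, orbit G (r i) ⊆ s := by
    rintro i _ ⟨g, rfl⟩
    exact hGs g _ (hr i)
  have hs : s = ⋃ i, orbit G (r i) :=
    subset_antisymm (fun x hx => Set.mem_iUnion.2 (hrep x hx).exists)
      (Set.iUnion_subset horbit_subset)
  have hdisj : Pairwise (Disjoint on fun i => orbit G (r i)) := fun i j hij =>
    Set.disjoint_left.2 fun x hi hj => hij ((hrep x (horbit_subset i hi)).unique hi hj)
  rw [hs, finsum_mem_iUnion hdisj fun i => Set.finite_range _, finsum_eq_sum_of_fintype]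

end MulAction

namespace Torus

variable {ℓ : ℕ}

theorem mem_intLattice_iff {x : Fin ℓ → ℝ} :
    x ∈ intLattice ℓ ↔ ∀ j, ∃ m : ℤ, (m : ℝ) = x j := by
  simp [intLattice, AddSubgroup.mem_pi, AddSubgroup.mem_zmultiples_iff]

theorem pT_eq_pT_iff {x y : Fin ℓ → ℝ} : pT ℓ x = pT ℓ y ↔ y - x ∈ intLattice ℓ := by
  rw [QuotientAddGroup.mk'_apply, QuotientAddGroup.mk'_apply, QuotientAddGroup.eq,
    neg_add_eq_sub]

theorem pT_surjective : Function.Surjective (pT ℓ) := QuotientAddGroup.mk'_surjective _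

theorem continuous_pT : Continuous (pT ℓ) := continuous_quot_mk

theorem exists_dotProduct_eq_intCast {x : Fin ℓ → ℝ} (hx : x ∈ intLattice ℓ) (v : Fin ℓ → ℤ) :
    ∃ m : ℤ, x ⬝ᵥ (fun j => (v j : ℝ)) = m := by
  choose m hm using mem_intLattice_iff.1 hx
  exact ⟨m ⬝ᵥ v, by simp [dotProduct, ← hm]⟩

theorem vecMul_mem_intLattice {x : Fin ℓ → ℝ} (hx : x ∈ intLattice ℓ)
    (M : Matrix (Fin ℓ) (Fin ℓ) ℤ) : x ᵥ* M.map (Int.cast : ℤ → ℝ) ∈ intLattice ℓ := by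
  choose m hm using mem_intLattice_iff.1 hx
  exact mem_intLattice_iff.2 fun j => ⟨(m ᵥ* M) j, by simp [Matrix.vecMul, dotProduct, ← hm]⟩

noncomputable def mapMatrix (M : Matrix (Fin ℓ) (Fin ℓ) ℤ) : Torus ℓ →+ Torus ℓ :=
  QuotientAddGroup.map _ _ (Matrix.vecMulLinear (M.map (Int.cast : ℤ → ℝ))).toAddMonoidHom
    fun _ hx => vecMul_mem_intLattice hx M

@[simp]
theorem mapMatrix_pT (M : Matrix (Fin ℓ) (Fin ℓ) ℤ) (x : Fin ℓ → ℝ) :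
    mapMatrix M (pT ℓ x) = pT ℓ (x ᵥ* M.map (Int.cast : ℤ → ℝ)) := rfl

theorem mapMatrix_mapMatrix (M N : Matrix (Fin ℓ) (Fin ℓ) ℤ) (t : Torus ℓ) :
    mapMatrix N (mapMatrix M t) = mapMatrix (M * N) t := by
  obtain ⟨x, rfl⟩ := pT_surjective t
  have : (M * N).map (Int.cast : ℤ → ℝ) = M.map Int.cast * N.map Int.cast :=
    Matrix.map_mul (f := Int.castRingHom ℝ)
  rw [mapMatrix_pT, mapMatrix_pT, mapMatrix_pT, Matrix.vecMul_vecMul, this]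

theorem mapMatrix_one (t : Torus ℓ) : mapMatrix 1 t = t := by
  obtain ⟨x, rfl⟩ := pT_surjective t
  rw [mapMatrix_pT, Matrix.map_one _ Int.cast_zero Int.cast_one, Matrix.vecMul_one]

theorem continuous_mapMatrix (M : Matrix (Fin ℓ) (Fin ℓ) ℤ) : Continuous (mapMatrix M) :=
  continuous_quot_lift _
    (continuous_pT.comp (Continuous.matrix_vecMul continuous_id continuous_const))

noncomputable def mapMatrixHomeomorph (g : Matrix.GeneralLinearGroup (Fin ℓ) ℤ) :
    Torus ℓ ≃ₜ Torus ℓ where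
  toFun := mapMatrix (g : Matrix (Fin ℓ) (Fin ℓ) ℤ)
  invFun := mapMatrix (g⁻¹ : Matrix.GeneralLinearGroup (Fin ℓ) ℤ)
  left_inv t := by rw [mapMatrix_mapMatrix, ← Units.val_mul, mul_inv_cancel, Units.val_one,
    mapMatrix_one]
  right_inv t := by rw [mapMatrix_mapMatrix, ← Units.val_mul, inv_mul_cancel, Units.val_one,
    mapMatrix_one]
  continuous_toFun := continuous_mapMatrix _
  continuous_invFun := continuous_mapMatrix _

@[simp]
theorem coe_mapMatrixHomeomorph (g : Matrix.GeneralLinearGroup (Fin ℓ) ℤ) :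
    ⇑(mapMatrixHomeomorph g) = mapMatrix (g : Matrix (Fin ℓ) (Fin ℓ) ℤ) := rfl

theorem mapMatrix_injective (g : Matrix.GeneralLinearGroup (Fin ℓ) ℤ) :
    Function.Injective (mapMatrix (g : Matrix (Fin ℓ) (Fin ℓ) ℤ)) :=
  (mapMatrixHomeomorph g).injective

end Torus

section TorusAction

open scoped Pointwise

variable {ℓ : ℕ} {Γ : Type*} [Group Γ] (ρ : Γ →* Matrix.GeneralLinearGroup (Fin ℓ) ℤ)

theorem tAct_realMat (δ : Γ) (C : Set (Torus ℓ)) :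
    tAct (realMat ρ δ) C = Torus.mapMatrix (ρ δ : Matrix (Fin ℓ) (Fin ℓ) ℤ) '' C := by
  conv_rhs => rw [← Set.image_preimage_eq C Torus.pT_surjective, Set.image_image]
  rw [tAct, Set.image_image]
  rfl

/-- `tAct` is a right action; inverting makes it a left action, to which the orbit-stabilizer
API of `MulAction` applies. -/
noncomputable abbrev torusAction : MulAction Γ (Torus ℓ) where
  smul γ t := Torus.mapMatrix (ρ γ⁻¹ : Matrix (Fin ℓ) (Fin ℓ) ℤ) t
  one_smul t := by
    change Torus.mapMatrix _ t = t
    rw [inv_one, map_one, Units.val_one, Torus.mapMatrix_one]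
  mul_smul g h t := by
    change Torus.mapMatrix _ t = Torus.mapMatrix _ (Torus.mapMatrix _ t)
    rw [Torus.mapMatrix_mapMatrix, _root_.mul_inv_rev, map_mul, Units.val_mul]

theorem tAct_realMat_eq_inv_smul (δ : Γ) (C : Set (Torus ℓ)) :
    letI := torusAction ρ
    tAct (realMat ρ δ) C = δ⁻¹ • C := by
  rw [tAct_realMat]
  change _ = (fun t => Torus.mapMatrix (ρ δ⁻¹⁻¹ : Matrix (Fin ℓ) (Fin ℓ) ℤ) t) '' C
  rw [inv_inv]

end TorusAction

section Chambers

variable {ℓ n : ℕ} (α : Fin n → Fin ℓ → ℤ)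

variable {α} in
theorem IsChamberT.eq_connectedComponentIn {C : Set (Torus ℓ)} (hC : IsChamberT α C)
    {t : Torus ℓ} (ht : t ∈ C) : C = connectedComponentIn (TA α) t := by
  obtain ⟨s, -, rfl⟩ := hC
  exact connectedComponentIn_eq ht

theorem pT_mem_TA_iff {x : Fin ℓ → ℝ} : pT ℓ x ∈ TA α ↔ x ∈ Maff α := by
  refine ⟨?_, fun hx => ⟨x, hx, rfl⟩⟩
  rintro ⟨y, hy, hyx⟩ i k hk
  obtain ⟨m, hm⟩ := Torus.exists_dotProduct_eq_intCast (Torus.pT_eq_pT_iff.1 hyx) (α i)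
  refine hy i (k - m) ?_
  rw [sub_dotProduct, hk] at hm
  push_cast
  linarith

theorem mem_Ioo_floor_of_mem_Maff {x : Fin ℓ → ℝ} (hx : x ∈ Maff α) (i : Fin n) :
    x ⬝ᵥ (fun j => (α i j : ℝ)) ∈
      Set.Ioo (⌊x ⬝ᵥ (fun j => (α i j : ℝ))⌋ : ℝ) (⌊x ⬝ᵥ (fun j => (α i j : ℝ))⌋ + 1) :=
  ⟨(Int.floor_le _).lt_of_ne fun h => hx i _ h.symm, Int.lt_floor_add_one _⟩

theorem segment_subset_Maff {x y : Fin ℓ → ℝ} (hx : x ∈ Maff α) (hy : y ∈ Maff α)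
    (hxy : ∀ i, ⌊x ⬝ᵥ (fun j => (α i j : ℝ))⌋ = ⌊y ⬝ᵥ (fun j => (α i j : ℝ))⌋) :
    segment ℝ x y ⊆ Maff α := by
  rintro _ ⟨a, b, ha, hb, hab, rfl⟩ i k hk
  have hyI := mem_Ioo_floor_of_mem_Maff α hy i
  rw [← hxy i] at hyI
  have hI := convex_Ioo _ _ (mem_Ioo_floor_of_mem_Maff α hx i) hyI ha hb hab
  rw [← smul_dotProduct, ← smul_dotProduct, ← add_dotProduct, hk] at hI
  have h1 : ⌊x ⬝ᵥ (fun j => (α i j : ℝ))⌋ < k := by exact_mod_cast hI.1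
  have h2 : k < ⌊x ⬝ᵥ (fun j => (α i j : ℝ))⌋ + 1 := by exact_mod_cast hI.2
  omega

theorem connectedComponentIn_TA_eq_of_floor_eq {x y : Fin ℓ → ℝ} (hx : x ∈ Maff α)
    (hy : y ∈ Maff α)
    (hxy : ∀ i, ⌊x ⬝ᵥ (fun j => (α i j : ℝ))⌋ = ⌊y ⬝ᵥ (fun j => (α i j : ℝ))⌋) :
    connectedComponentIn (TA α) (pT ℓ x) = connectedComponentIn (TA α) (pT ℓ y) := by
  have hsub : pT ℓ '' segment ℝ x y ⊆ TA α := Set.image_mono (segment_subset_Maff α hx hy hxy)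
  refine connectedComponentIn_eq (((convex_segment x y).isPreconnected.image _
    Torus.continuous_pT.continuousOn).subset_connectedComponentIn ?_ hsub ?_)
  · exact ⟨x, left_mem_segment ℝ x y, rfl⟩
  · exact ⟨y, right_mem_segment ℝ x y, rfl⟩

theorem abs_dotProduct_le_of_mem_Ico {x : Fin ℓ → ℝ} (hx : ∀ j, x j ∈ Set.Ico (0 : ℝ) 1)
    (v : Fin ℓ → ℝ) : |x ⬝ᵥ v| ≤ ∑ j, |v j| := by
  refine (Finset.abs_sum_le_sum_abs _ _).trans (Finset.sum_le_sum fun j _ => ?_)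
  rw [abs_mul, abs_of_nonneg (hx j).1]
  exact mul_le_of_le_one_left (abs_nonneg _) (hx j).2.le

theorem finite_setOf_isChamberT : {C | IsChamberT α C}.Finite := by
  set B : Fin n → ℤ := fun i => ∑ j, |α i j|
  refine ((Set.finite_Icc (-B) B).biUnion fun k _ => Set.Subsingleton.finite (s :=
    {C | ∃ x ∈ Maff α, (∀ i, ⌊x ⬝ᵥ (fun j => (α i j : ℝ))⌋ = k i) ∧
      C = connectedComponentIn (TA α) (pT ℓ x)}) ?_).subset ?_
  · rintro _ ⟨x, hx, hxk, rfl⟩ _ ⟨y, hy, hyk, rfl⟩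
    exact connectedComponentIn_TA_eq_of_floor_eq α hx hy fun i => (hxk i).trans (hyk i).symm
  rintro C ⟨_, ⟨x, hx, rfl⟩, rfl⟩
  set x' : Fin ℓ → ℝ := fun j => Int.fract (x j)
  have hx'x : pT ℓ x' = pT ℓ x :=
    Torus.pT_eq_pT_iff.2 (Torus.mem_intLattice_iff.2 fun j => ⟨⌊x j⌋, by simp [x']⟩)
  have hx' : x' ∈ Maff α := (pT_mem_TA_iff α).1 (hx'x ▸ ⟨x, hx, rfl⟩)
  have hbound : ∀ i, |x' ⬝ᵥ (fun j => (α i j : ℝ))| ≤ B i := fun i => by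
    simpa [B] using abs_dotProduct_le_of_mem_Ico
      (fun j => ⟨Int.fract_nonneg (x j), Int.fract_lt_one (x j)⟩) fun j => (α i j : ℝ)
  refine Set.mem_biUnion (x := fun i => ⌊x' ⬝ᵥ (fun j => (α i j : ℝ))⌋)
    ⟨fun i => ?_, fun i => ?_⟩ ⟨x', hx', fun i => rfl, by rw [hx'x]⟩
  · exact Int.le_floor.2 (by simpa using neg_le_of_abs_le (hbound i))
  · exact Int.floor_le_iff.2 (by linarith [le_of_abs_le (hbound i)])

end Chambers

section Partition

variable {ℓ n : ℕ} (α : Fin n → Fin ℓ → ℤ)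

theorem biUnion_setOf_isChamberT : ⋃ C ∈ {C | IsChamberT α C}, C = TA α :=
  subset_antisymm (Set.iUnion₂_subset fun _ ⟨_, _, hC⟩ => hC ▸ connectedComponentIn_subset _ _)
    fun t ht => Set.mem_biUnion ⟨t, ht, rfl⟩ (mem_connectedComponentIn ht)

theorem pairwiseDisjoint_setOf_isChamberT : {C | IsChamberT α C}.PairwiseDisjoint id :=
  fun _ hC _ hD hCD => Set.disjoint_left.2 fun _ htC htD =>
    hCD ((IsChamberT.eq_connectedComponentIn hC htC).trans
      (IsChamberT.eq_connectedComponentIn hD htD).symm)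

theorem ncard_TA_inter_eq_finsum {P : Set (Torus ℓ)} (hP : P.Finite) :
    (TA α ∩ P).ncard = ∑ᶠ C ∈ {C | IsChamberT α C}, (C ∩ P).ncard := by
  rw [← biUnion_setOf_isChamberT α, Set.iUnion₂_inter]
  exact (finite_setOf_isChamberT α).ncard_biUnion (fun C _ => hP.inter_of_right C)
    ((pairwiseDisjoint_setOf_isChamberT α).mono fun C => Set.inter_subset_left)

end Partition

section Invariance

variable {ℓ n : ℕ} {Γ : Type*} [Group Γ] (ρ : Γ →* Matrix.GeneralLinearGroup (Fin ℓ) ℤ)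
  (α : Fin n → Fin ℓ → ℤ)

def IsInvariantArrangement : Prop :=
  ∀ (γ : Γ) (i : Fin n), ∃ j : Fin n,
    ((↑(ρ γ)⁻¹ : Matrix (Fin ℓ) (Fin ℓ) ℤ) *ᵥ α i = α j) ∨
    ((↑(ρ γ)⁻¹ : Matrix (Fin ℓ) (Fin ℓ) ℤ) *ᵥ α i = -α j)

variable {ρ α}

theorem IsInvariantArrangement.vecMul_mem_Maff (hA : IsInvariantArrangement ρ α) (γ : Γ)
    {x : Fin ℓ → ℝ} (hx : x ∈ Maff α) : x ᵥ* realMat ρ γ ∈ Maff α := by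
  intro i k hk
  obtain ⟨j, hj⟩ := hA γ⁻¹ i
  rw [map_inv, inv_inv] at hj
  have hcast : realMat ρ γ *ᵥ (fun l => (α i l : ℝ)) =
      fun l => (((ρ γ : Matrix (Fin ℓ) (Fin ℓ) ℤ) *ᵥ α i) l : ℝ) :=
    funext fun l => (RingHom.map_mulVec (Int.castRingHom ℝ) _ _ l).symm
  rw [← Matrix.dotProduct_mulVec, hcast] at hk
  rcases hj with hj | hj <;> rw [hj] at hk
  · exact hx j k hk
  · refine hx j (-k) ?_
    simp only [Pi.neg_apply, Int.cast_neg] at hk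
    rw [show (fun l => -((α j l : ℝ))) = -fun l => (α j l : ℝ) from rfl, dotProduct_neg] at hk
    push_cast
    linarith

theorem IsInvariantArrangement.mapMatrix_mem_TA (hA : IsInvariantArrangement ρ α) (γ : Γ)
    {t : Torus ℓ} (ht : t ∈ TA α) : Torus.mapMatrix (ρ γ : Matrix (Fin ℓ) (Fin ℓ) ℤ) t ∈ TA α := by
  obtain ⟨x, hx, rfl⟩ := ht
  exact ⟨_, hA.vecMul_mem_Maff γ hx, rfl⟩

theorem IsInvariantArrangement.image_mapMatrix_TA (hA : IsInvariantArrangement ρ α) (γ : Γ) :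
    Torus.mapMatrix (ρ γ : Matrix (Fin ℓ) (Fin ℓ) ℤ) '' TA α = TA α := by
  refine subset_antisymm (Set.image_subset_iff.2 fun t => hA.mapMatrix_mem_TA γ) fun t ht => ?_
  refine ⟨_, hA.mapMatrix_mem_TA γ⁻¹ ht, ?_⟩
  rw [Torus.mapMatrix_mapMatrix, ← Units.val_mul, ← map_mul, inv_mul_cancel, map_one,
    Units.val_one, Torus.mapMatrix_one]

theorem IsInvariantArrangement.isChamberT_image (hA : IsInvariantArrangement ρ α) (γ : Γ)
    {C : Set (Torus ℓ)} (hC : IsChamberT α C) :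
    IsChamberT α (Torus.mapMatrix (ρ γ : Matrix (Fin ℓ) (Fin ℓ) ℤ) '' C) := by
  obtain ⟨t, ht, rfl⟩ := hC
  refine ⟨_, hA.mapMatrix_mem_TA γ ht, ?_⟩
  have := (Torus.mapMatrixHomeomorph (ρ γ)).image_connectedComponentIn ht
  rwa [Torus.coe_mapMatrixHomeomorph, hA.image_mapMatrix_TA] at this

end Invariance

namespace Torus

variable {ℓ : ℕ} (q : ℕ)

noncomputable def ofIntDiv (m : Fin ℓ → ℤ) : Torus ℓ := pT ℓ fun j => (m j : ℝ) / q

variable {q}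

theorem mapMatrix_ofIntDiv (M : Matrix (Fin ℓ) (Fin ℓ) ℤ) (m : Fin ℓ → ℤ) :
    mapMatrix M (ofIntDiv q m) = ofIntDiv q (m ᵥ* M) := by
  rw [ofIntDiv, mapMatrix_pT, ofIntDiv]
  congr 1
  funext j
  simp [Matrix.vecMul, dotProduct, Finset.sum_div, div_mul_eq_mul_div]

variable [NeZero q]

theorem ofIntDiv_eq_ofIntDiv_iff {m m' : Fin ℓ → ℤ} :
    ofIntDiv q m = ofIntDiv q m' ↔
      (fun j => (m j : ZMod q)) = fun j => (m' j : ZMod q) := by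
  simp only [ofIntDiv, pT_eq_pT_iff, mem_intLattice_iff, funext_iff,
    ZMod.intCast_eq_intCast_iff_dvd_sub, ← exists_intCast_eq_div_natCast_iff (NeZero.ne q),
    Pi.sub_apply]
  push_cast
  simp only [sub_div]

theorem nsmul_ofIntDiv (m : Fin ℓ → ℤ) : q • ofIntDiv q m = 0 := by
  rw [ofIntDiv, ← map_nsmul, ← (pT ℓ).map_zero, pT_eq_pT_iff, zero_sub, neg_mem_iff,
    mem_intLattice_iff]
  have hq : (q : ℝ) ≠ 0 := Nat.cast_ne_zero.2 (NeZero.ne q)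
  refine fun j => ⟨m j, ?_⟩
  rw [Pi.smul_apply, nsmul_eq_mul]
  field_simp

theorem exists_ofIntDiv_of_nsmul_eq_zero {t : Torus ℓ} (ht : q • t = 0) :
    ∃ m, ofIntDiv q m = t := by
  obtain ⟨x, rfl⟩ := pT_surjective t
  rw [← map_nsmul, ← (pT ℓ).map_zero, pT_eq_pT_iff, zero_sub, neg_mem_iff,
    mem_intLattice_iff] at ht
  choose m hm using ht
  have hq : (q : ℝ) ≠ 0 := Nat.cast_ne_zero.2 (NeZero.ne q)
  refine ⟨m, congrArg (pT ℓ) (funext fun j => ?_)⟩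
  rw [hm j, Pi.smul_apply, nsmul_eq_mul]
  field_simp

theorem finite_setOf_nsmul_eq_zero : {t : Torus ℓ | q • t = 0}.Finite :=
  (Set.finite_range fun x : Fin ℓ → ZMod q => ofIntDiv q fun j => ((x j).cast : ℤ)).subset
    fun t ht => by
      obtain ⟨m, rfl⟩ := exists_ofIntDiv_of_nsmul_eq_zero ht
      exact ⟨fun j => m j, ofIntDiv_eq_ofIntDiv_iff.2 (by simp)⟩

theorem mapMatrix_ofIntDiv_eq_self_iff (M : Matrix (Fin ℓ) (Fin ℓ) ℤ) (m : Fin ℓ → ℤ) :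
    mapMatrix M (ofIntDiv q m) = ofIntDiv q m ↔
      (fun j => (m j : ZMod q)) ᵥ* M.map (Int.cast : ℤ → ZMod q) = fun j => (m j : ZMod q) := by
  rw [mapMatrix_ofIntDiv, ofIntDiv_eq_ofIntDiv_iff]
  simp only [funext_iff, Matrix.vecMul, dotProduct, Matrix.map_apply, Int.cast_sum,
    Int.cast_mul]

end Torus

section TorsionPoints

variable {ℓ n : ℕ} (α : Fin n → Fin ℓ → ℤ) {q : ℕ} [NeZero q]

theorem ofIntDiv_mem_TA_iff (m : Fin ℓ → ℤ) :
    Torus.ofIntDiv q m ∈ TA α ↔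
      ∀ i, (fun j => (m j : ZMod q)) ⬝ᵥ (fun j => (α i j : ZMod q)) ≠ 0 := by
  have hdot : ∀ i, (fun j => (m j : ℝ) / q) ⬝ᵥ (fun j => (α i j : ℝ)) = ((m ⬝ᵥ α i : ℤ) : ℝ) / q :=
    fun i => by simp [dotProduct, Finset.sum_div, div_mul_eq_mul_div]
  simp only [Torus.ofIntDiv, pT_mem_TA_iff, Maff, Set.mem_ofPred_eq, hdot]
  refine forall_congr' fun i => ?_
  have hcast : ((m ⬝ᵥ α i : ℤ) : ZMod q) =
      (fun j => (m j : ZMod q)) ⬝ᵥ (fun j => (α i j : ZMod q)) := by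
    simp [dotProduct]
  simp_rw [ne_eq, eq_comm (a := ((m ⬝ᵥ α i : ℤ) : ℝ) / q), ← not_exists,
    exists_intCast_eq_div_natCast_iff (NeZero.ne q), ← ZMod.intCast_zmod_eq_zero_iff_dvd, hcast]

theorem natCard_fixedPoints_eq_ncard (M : Matrix (Fin ℓ) (Fin ℓ) ℤ) :
    Nat.card {x : Fin ℓ → ZMod q //
        (∀ i : Fin n, x ⬝ᵥ (fun j => ((α i j : ℤ) : ZMod q)) ≠ 0) ∧
        x ᵥ* M.map (Int.cast : ℤ → ZMod q) = x} =
      (TA α ∩ {t | q • t = 0} ∩ {t | Torus.mapMatrix M t = t}).ncard := by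
  set ψ : (Fin ℓ → ZMod q) → Torus ℓ := fun x => Torus.ofIntDiv q fun j => ((x j).cast : ℤ)
  have hlift : ∀ x : Fin ℓ → ZMod q, (fun j => (((x j).cast : ℤ) : ZMod q)) = x :=
    fun x => funext fun j => ZMod.intCast_zmod_cast _
  have hψ : ψ.Injective := fun x y h => by
    simpa only [hlift] using Torus.ofIntDiv_eq_ofIntDiv_iff.1 h
  have hψ_cast : ∀ m : Fin ℓ → ℤ, ψ (fun j => (m j : ZMod q)) = Torus.ofIntDiv q m :=
    fun m => Torus.ofIntDiv_eq_ofIntDiv_iff.2 (hlift _)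
  have hmem : ∀ x, ψ x ∈ TA α ∩ {t | q • t = 0} ∩ {t | Torus.mapMatrix M t = t} ↔
      (∀ i : Fin n, x ⬝ᵥ (fun j => ((α i j : ℤ) : ZMod q)) ≠ 0) ∧
        x ᵥ* M.map (Int.cast : ℤ → ZMod q) = x := fun x => by
    simp only [Set.mem_inter_iff, Set.mem_ofPred_eq, ψ, ofIntDiv_mem_TA_iff,
      Torus.nsmul_ofIntDiv, Torus.mapMatrix_ofIntDiv_eq_self_iff, hlift, and_true]
  rw [← Set.coe_ofPred, Nat.card_coe_set_eq, ← Set.ncard_image_of_injective _ hψ]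
  congr 1
  ext t
  refine ⟨fun ⟨x, hx, hxt⟩ => hxt ▸ (hmem x).2 hx, fun ht => ?_⟩
  obtain ⟨m, rfl⟩ := Torus.exists_ofIntDiv_of_nsmul_eq_zero ht.1.2
  rw [← hψ_cast] at ht ⊢
  exact ⟨_, (hmem _).1 ht, rfl⟩

end TorsionPoints

section Characters

variable {ℓ n : ℕ} {Γ : Type*} [Group Γ] (ρ : Γ →* Matrix.GeneralLinearGroup (Fin ℓ) ℤ)
  (α : Fin n → Fin ℓ → ℤ) (q : ℕ)

theorem chamberChar_eq_ncard (C : Set (Torus ℓ)) (γ : Γ) :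
    chamberChar ρ C q γ = (C ∩ {t | q • t = 0} ∩
      {t | Torus.mapMatrix (ρ γ : Matrix (Fin ℓ) (Fin ℓ) ℤ) t = t}).ncard := by
  rw [chamberChar, ← Nat.card_coe_set_eq]
  refine Nat.card_congr (Equiv.subtypeEquivRight fun t => ?_)
  simp only [Set.mem_inter_iff, Set.mem_ofPred_eq, and_assoc]
  refine and_congr_right' (and_congr_right' ⟨?_, fun h => ?_⟩)
  · rintro ⟨x, rfl, hx⟩
    exact hx
  · obtain ⟨x, rfl⟩ := Torus.pT_surjective t
    exact ⟨x, rfl, h⟩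

theorem natCard_fixedPoints_eq_finsum_chamberChar [NeZero q] (γ : Γ) :
    Nat.card {x : Fin ℓ → ZMod q //
        (∀ i : Fin n, x ⬝ᵥ (fun j => ((α i j : ℤ) : ZMod q)) ≠ 0) ∧
        x ᵥ* (((ρ γ : Matrix (Fin ℓ) (Fin ℓ) ℤ)).map (Int.cast : ℤ → ZMod q)) = x} =
      ∑ᶠ C ∈ {C | IsChamberT α C}, chamberChar ρ C q γ := by
  rw [natCard_fixedPoints_eq_ncard, Set.inter_assoc,
    ncard_TA_inter_eq_finsum α (Torus.finite_setOf_nsmul_eq_zero.subset Set.inter_subset_left)]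
  simp only [chamberChar_eq_ncard, Set.inter_assoc]

end Characters

section ChamberAction

open scoped Pointwise
open MulAction

variable {ℓ n : ℕ} {Γ : Type*} [Group Γ] {ρ : Γ →* Matrix.GeneralLinearGroup (Fin ℓ) ℤ}
  {α : Fin n → Fin ℓ → ℤ}

theorem tAct_realMat_eq_self_iff (g : Γ) (C : Set (Torus ℓ)) :
    letI := torusAction ρ
    tAct (realMat ρ g) C = C ↔ g ∈ stabilizer Γ C := by
  let _ := torusAction ρ
  rw [tAct_realMat_eq_inv_smul, inv_smul_eq_iff, eq_comm, mem_stabilizer_iff]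

theorem setOf_tAct_eq_orbit (C : Set (Torus ℓ)) :
    letI := torusAction ρ
    {D | ∃ δ : Γ, D = tAct (realMat ρ δ) C} = orbit Γ C := by
  let _ := torusAction ρ
  ext D
  simp only [Set.mem_ofPred_eq, tAct_realMat_eq_inv_smul, mem_orbit_iff]
  exact ⟨fun ⟨δ, h⟩ => ⟨δ⁻¹, h.symm⟩, fun ⟨δ, h⟩ => ⟨δ⁻¹, by rw [inv_inv, h]⟩⟩

theorem smul_setOf_nsmul_eq_zero (q : ℕ) (g : Γ) :
    letI := torusAction ρ
    g • {t : Torus ℓ | q • t = 0} = {t | q • t = 0} := by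
  let _ := torusAction ρ
  ext t
  rw [Set.mem_smul_set_iff_inv_smul_mem]
  change q • Torus.mapMatrix _ t = 0 ↔ q • t = 0
  rw [← map_nsmul, (Torus.mapMatrix_injective _).eq_iff' (map_zero _)]

theorem chamberChar_eq_natCard_fixedBy (q : ℕ) (C : Set (Torus ℓ)) (γ : Γ) :
    letI := torusAction ρ
    chamberChar ρ C q γ = Nat.card ↥(C ∩ {t | q • t = 0} ∩ fixedBy (Torus ℓ) γ) := by
  let _ := torusAction ρ
  rw [chamberChar_eq_ncard, ← fixedBy_inv, Nat.card_coe_set_eq]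
  congr 2
  ext t
  change _ = _ ↔ Torus.mapMatrix _ t = t
  rw [inv_inv]

theorem IsInvariantArrangement.isChamberT_smul (hA : IsInvariantArrangement ρ α) (g : Γ)
    {C : Set (Torus ℓ)} (hC : IsChamberT α C) :
    letI := torusAction ρ
    IsChamberT α (g • C) :=
  hA.isChamberT_image g⁻¹ hC

theorem IsInvariantArrangement.isBlock (hA : IsInvariantArrangement ρ α) {C : Set (Torus ℓ)}
    (hC : IsChamberT α C) :
    letI := torusAction ρ
    IsBlock Γ C := by
  let _ := torusAction ρ
  refine isBlock_iff_smul_eq_of_mem.2 fun g t ht hgt => ?_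
  rw [(hA.isChamberT_smul g hC).eq_connectedComponentIn (Set.smul_mem_smul_set ht),
    ← hC.eq_connectedComponentIn hgt]

end ChamberAction

section InducedCharacters

open scoped Pointwise
open MulAction

variable {ℓ n : ℕ} {Γ : Type*} [Group Γ] [Fintype Γ]
  {ρ : Γ →* Matrix.GeneralLinearGroup (Fin ℓ) ℤ} {α : Fin n → Fin ℓ → ℤ}

theorem IsInvariantArrangement.indCharVal_eq_finsum (hA : IsInvariantArrangement ρ α)
    {C : Set (Torus ℓ)} (hC : IsChamberT α C) (q : ℕ) (γ : Γ) :
    indCharVal ρ C q γ =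
      ∑ᶠ D ∈ {D | ∃ δ : Γ, D = tAct (realMat ρ δ) C}, (chamberChar ρ D q γ : ℂ) := by
  let _ := torusAction ρ
  have hstab : Nat.card {δ : Γ // tAct (realMat ρ δ) C = C} = Nat.card (stabilizer Γ C) :=
    Nat.card_congr (Equiv.subtypeEquivRight fun δ => tAct_realMat_eq_self_iff δ C)
  have hcard : (Nat.card (stabilizer Γ C) : ℂ) ≠ 0 := Nat.cast_ne_zero.2 Nat.card_pos.ne'
  rw [indCharVal, hstab,
    finsum_subtype_eq_finsum_cond (f := fun σ => (chamberChar ρ C q (σ⁻¹ * γ * σ) : ℂ)),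
    setOf_tAct_eq_orbit]
  simp only [tAct_realMat_eq_self_iff, chamberChar_eq_natCard_fixedBy]
  rw [(hA.isBlock hC).finsum_natCard_fixedBy_conj (smul_setOf_nsmul_eq_zero q), nsmul_eq_mul,
    inv_mul_cancel_left₀ hcard]

theorem IsInvariantArrangement.finsum_inv_natCard_orbit_mul_indCharVal
    (hA : IsInvariantArrangement ρ α) (q : ℕ) (γ : Γ) :
    ∑ᶠ C ∈ {C | IsChamberT α C},
        (Nat.card {D : Set (Torus ℓ) // ∃ δ : Γ, D = tAct (realMat ρ δ) C} : ℂ)⁻¹ *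
          indCharVal ρ C q γ =
      ∑ᶠ C ∈ {C | IsChamberT α C}, (chamberChar ρ C q γ : ℂ) := by
  let _ := torusAction ρ
  rw [finsum_mem_congr rfl fun C hC => by
    rw [hA.indCharVal_eq_finsum hC, ← Set.coe_ofPred, setOf_tAct_eq_orbit]]
  exact finsum_mem_inv_natCard_orbit_mul (finite_setOf_isChamberT α)
    (fun g C hC => hA.isChamberT_smul g hC) _

theorem IsInvariantArrangement.sum_indCharVal_of_existsUnique
    (hA : IsInvariantArrangement ρ α) {ι : Type*} [Fintype ι] {Cr : ι → Set (Torus ℓ)}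
    (hCr : ∀ i, IsChamberT α (Cr i))
    (hrep : ∀ C : Set (Torus ℓ), IsChamberT α C →
      ∃! i, ∃ δ : Γ, C = tAct (realMat ρ δ) (Cr i)) (q : ℕ) (γ : Γ) :
    ∑ i, indCharVal ρ (Cr i) q γ = ∑ᶠ C ∈ {C | IsChamberT α C}, (chamberChar ρ C q γ : ℂ) := by
  let _ := torusAction ρ
  simp only [hA.indCharVal_eq_finsum (hCr _), setOf_tAct_eq_orbit]
  refine sum_finsum_mem_orbit_of_existsUnique (s := {C | IsChamberT α C})
    (fun g C hC => hA.isChamberT_smul g hC) hCr (fun C hC => ?_) _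
  simpa only [← setOf_tAct_eq_orbit, Set.mem_ofPred_eq] using hrep C hC

end InducedCharacters

theorem stmt_13_general {ℓ n : ℕ} {Γ : Type*} [Group Γ] [Fintype Γ]
    (ρ : Γ →* Matrix.GeneralLinearGroup (Fin ℓ) ℤ)
    (α : Fin n → Fin ℓ → ℤ)
    (hinv : ∀ (γ : Γ) (i : Fin n), ∃ j : Fin n,
      ((↑(ρ γ)⁻¹ : Matrix (Fin ℓ) (Fin ℓ) ℤ) *ᵥ α i = α j) ∨
      ((↑(ρ γ)⁻¹ : Matrix (Fin ℓ) (Fin ℓ) ℤ) *ᵥ α i = -α j))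
    (q : ℕ) (hq : 0 < q) :
    (∀ γ : Γ,
      (Nat.card {x : Fin ℓ → ZMod q //
          (∀ i : Fin n, x ⬝ᵥ (fun j => ((α i j : ℤ) : ZMod q)) ≠ 0) ∧
          x ᵥ* (((ρ γ : Matrix (Fin ℓ) (Fin ℓ) ℤ)).map (Int.cast : ℤ → ZMod q)) = x} : ℂ) =
        ∑ᶠ C ∈ {C : Set (Torus ℓ) | IsChamberT α C},
          ((Nat.card {D : Set (Torus ℓ) // ∃ δ : Γ, D = tAct (realMat ρ δ) C} : ℂ))⁻¹ *
            indCharVal ρ C q γ) ∧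
    (∀ (k : ℕ) (Cr : Fin k → Set (Torus ℓ)),
      (∀ i, IsChamberT α (Cr i)) →
      (∀ C : Set (Torus ℓ), IsChamberT α C →
        ∃! i : Fin k, ∃ δ : Γ, C = tAct (realMat ρ δ) (Cr i)) →
      ∀ γ : Γ,
        (Nat.card {x : Fin ℓ → ZMod q //
            (∀ i : Fin n, x ⬝ᵥ (fun j => ((α i j : ℤ) : ZMod q)) ≠ 0) ∧
            x ᵥ* (((ρ γ : Matrix (Fin ℓ) (Fin ℓ) ℤ)).map (Int.cast : ℤ → ZMod q)) = x} : ℂ) =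
          ∑ i : Fin k, indCharVal ρ (Cr i) q γ) := by
  have hA : IsInvariantArrangement ρ α := hinv
  have : NeZero q := ⟨hq.ne'⟩
  refine ⟨fun γ => ?_, fun k Cr hCr hrep γ => ?_⟩
  · rw [natCard_fixedPoints_eq_finsum_chamberChar, Nat.cast_finsum_mem (finite_setOf_isChamberT α),
      hA.finsum_inv_natCard_orbit_mul_indCharVal]
  · rw [natCard_fixedPoints_eq_finsum_chamberChar, Nat.cast_finsum_mem (finite_setOf_isChamberT α),
      hA.sum_indCharVal_of_existsUnique hCr hrep]

/-- Let `A` be a nonempty `Γ`-invariant central hyperplane arrangement over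
`L = ℤ^ℓ`.  For every `q ∈ ℤ_{>0}`,
`χ_{A,q} = Σ_{C ∈ C_T} (1/#Γ(C)) · Ind_{Γ_C}^Γ χ_{C,q} = Σ_{i=1}^k Ind_{Γ_{C_i}}^Γ χ_{C_i,q}`,
where `Γ(C)` is the `Γ`-orbit of the chamber `C` and `{C_1,…,C_k}` is any set of
representatives of the `Γ`-orbits of `C_T`. -/
theorem stmt_13 {ℓ n : ℕ} (hn : 0 < n) {Γ : Type*} [Group Γ] [Fintype Γ]
    (ρ : Γ →* Matrix.GeneralLinearGroup (Fin ℓ) ℤ)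
    (hρ : Function.Injective ρ)
    (α : Fin n → Fin ℓ → ℤ)
    (hinv : ∀ (γ : Γ) (i : Fin n), ∃ j : Fin n,
      ((↑(ρ γ)⁻¹ : Matrix (Fin ℓ) (Fin ℓ) ℤ) *ᵥ α i = α j) ∨
      ((↑(ρ γ)⁻¹ : Matrix (Fin ℓ) (Fin ℓ) ℤ) *ᵥ α i = -α j))
    (q : ℕ) (hq : 0 < q) :
    (∀ γ : Γ,
      (Nat.card {x : Fin ℓ → ZMod q //
          (∀ i : Fin n, x ⬝ᵥ (fun j => ((α i j : ℤ) : ZMod q)) ≠ 0) ∧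
          x ᵥ* (((ρ γ : Matrix (Fin ℓ) (Fin ℓ) ℤ)).map (Int.cast : ℤ → ZMod q)) = x} : ℂ) =
        ∑ᶠ C ∈ {C : Set (Torus ℓ) | IsChamberT α C},
          ((Nat.card {D : Set (Torus ℓ) // ∃ δ : Γ, D = tAct (realMat ρ δ) C} : ℂ))⁻¹ *
            indCharVal ρ C q γ) ∧
    (∀ (k : ℕ) (Cr : Fin k → Set (Torus ℓ)),
      (∀ i, IsChamberT α (Cr i)) →
      (∀ C : Set (Torus ℓ), IsChamberT α C →
        ∃! i : Fin k, ∃ δ : Γ, C = tAct (realMat ρ δ) (Cr i)) →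
      ∀ γ : Γ,
        (Nat.card {x : Fin ℓ → ZMod q //
            (∀ i : Fin n, x ⬝ᵥ (fun j => ((α i j : ℤ) : ZMod q)) ≠ 0) ∧
            x ᵥ* (((ρ γ : Matrix (Fin ℓ) (Fin ℓ) ℤ)).map (Int.cast : ℤ → ZMod q)) = x} : ℂ) =
          ∑ i : Fin k, indCharVal ρ (Cr i) q γ) :=
  stmt_13_general ρ α hinv q hq
end

section
/- In type A_ℓ, with g·d = ℓ+1 and P := conv{f^g_0, …, f^g_{g−1}} where f^g_b := (1/d) · Σ_{j ∈ {0,…,ℓ}, j ≡ b (mod g)} ϖ_j, the Ehrhart counting function of P with respect to the coweight lattice Z satisfies: #(qP ∩ Z) = 0 if d does not divide q, and #(qP ∩ Z) = binom(g − 1 + q/d, g − 1) if d divides q. Consequently, the number of lattice points in the dilated relative interior is #(qP° ∩ Z) = 0 if d ∤ q, and #(qP° ∩ Z) = (q − d)(q − 2d)⋯(q − d(g−1)) / (d^{g−1}(g−1)!) if d | q. -/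
open scoped Pointwise

/-- The coweight lattice of type `A_ℓ`:
`Z = {x ∈ E : (α, x) ∈ ℤ for all roots α = e_i − e_j}`, where
`E = {x ∈ ℝ^{ℓ+1} : Σ x_i = 0}`. -/
def ZA (ℓ : ℕ) : AddSubgroup (Fin (ℓ + 1) → ℝ) where
  carrier := {x | (∑ i, x i) = 0 ∧ ∀ i j : Fin (ℓ + 1), ∃ m : ℤ, x i - x j = (m : ℝ)}
  zero_mem' := ⟨by simp, fun i j => ⟨0, by simp⟩⟩
  add_mem' := by
    rintro x y ⟨hx0, hx⟩ ⟨hy0, hy⟩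
    refine ⟨by simp [Finset.sum_add_distrib, hx0, hy0], fun i j => ?_⟩
    obtain ⟨m, hm⟩ := hx i j
    obtain ⟨m', hm'⟩ := hy i j
    exact ⟨m + m', by push_cast; simp only [Pi.add_apply]; linarith⟩
  neg_mem' := by
    rintro x ⟨hx0, hx⟩
    refine ⟨by simp [hx0], fun i j => ?_⟩
    obtain ⟨m, hm⟩ := hx i j
    exact ⟨-m, by push_cast; simp only [Pi.neg_apply]; linarith⟩

/-- The fundamental coweights of type `A_ℓ`:
`ϖ_j = (e_1 + ⋯ + e_j) − (j/(ℓ+1))(e_1 + ⋯ + e_{ℓ+1})`, with `ϖ_0 = 0`. -/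
noncomputable def varpi (ℓ j : ℕ) : Fin (ℓ + 1) → ℝ :=
  fun i => (if (i : ℕ) < j then 1 else 0) - (j : ℝ) / (ℓ + 1)

/-- `f^g_b = (1/d) Σ_{0 ≤ j ≤ ℓ, j ≡ b mod g} ϖ_j`. -/
noncomputable def fgb (ℓ g d b : ℕ) : Fin (ℓ + 1) → ℝ :=
  (d : ℝ)⁻¹ • ∑ j ∈ (Finset.range (ℓ + 1)).filter (fun j => j % g = b), varpi ℓ j

/-!
The vertices `f_b` are affinely independent, so `qP` consists of the points `∑ μ_b f_b` with
`μ_b ≥ 0` and `∑ μ_b = q`, and `qP°` of those with all `μ_b > 0`. Since `ϖ_j(i) - ϖ_j(i + 1)` is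
the indicator of `j = i + 1`, such a point `x` satisfies `d (x_i - x_{i+1}) = μ_b` whenever
`i + 1 ≡ b mod g`, so `x` lies in the coweight lattice exactly when every `μ_b` is a multiple of
`d`. Lattice points of `qP` (resp. `qP°`) therefore correspond to the solutions of `d ∑ c_b = q`
in natural numbers `c_b ≥ 0` (resp. `c_b > 0`), which are counted by stars and bars.
-/

open Set Finset

section Simplex

variable {ι E : Type*} [Fintype ι]

theorem mem_convexHull_range_iff [AddCommGroup E] [Module ℝ E] {p : ι → E} {x : E} :
    x ∈ convexHull ℝ (range p) ↔
      ∃ w : ι → ℝ, (∀ i, 0 ≤ w i) ∧ ∑ i, w i = 1 ∧ ∑ i, w i • p i = x := by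
  classical
  have hhull : convexHull ℝ (range p) = Fintype.linearCombination ℝ p '' stdSimplex ℝ ι := by
    rw [← convexHull_rangle_single_eq_stdSimplex, LinearMap.image_convexHull, ← range_comp]
    congr 1
    ext i
    simp
  simp [hhull, stdSimplex, Fintype.linearCombination_apply, and_assoc]

theorem mem_smul_set_iff_exists_weights [AddCommGroup E] [Module ℝ E] {p : ι → E} {S : Set E}
    {W : Set (ι → ℝ)} (hW : ∀ c : ℝ, 0 < c → ∀ w ∈ W, c • w ∈ W)
    (hS : ∀ x, x ∈ S ↔ ∃ w ∈ W, ∑ i, w i = 1 ∧ ∑ i, w i • p i = x) {t : ℝ} (ht : 0 < t)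
    {x : E} : x ∈ t • S ↔ ∃ μ ∈ W, ∑ i, μ i = t ∧ ∑ i, μ i • p i = x := by
  rw [mem_smul_set_iff_inv_smul_mem₀ ht.ne', hS]
  constructor
  · rintro ⟨w, hw, hw1, hwx⟩
    refine ⟨t • w, hW t ht w hw, by simp [← mul_sum, hw1], ?_⟩
    simp only [Pi.smul_apply, smul_eq_mul, mul_smul, ← smul_sum, hwx, smul_inv_smul₀ ht.ne']
  · rintro ⟨μ, hμ, hμ1, rfl⟩
    refine ⟨t⁻¹ • μ, hW _ (inv_pos.2 ht) μ hμ, by simp [← mul_sum, hμ1, ht.ne'], ?_⟩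
    simp only [Pi.smul_apply, smul_eq_mul, mul_smul, ← smul_sum]

theorem AffineBasis.interior_setOf_nonneg_coord {V P : Type*} [NormedAddCommGroup V]
    [NormedSpace ℝ V] [FiniteDimensional ℝ V] [MetricSpace P] [NormedAddTorsor V P]
    (b : AffineBasis ι ℝ P) :
    interior {z | ∀ i, 0 ≤ b.coord i z} = {z | ∀ i, 0 < b.coord i z} := by
  cases subsingleton_or_nontrivial ι
  · have hone : ∀ i z, b.coord i z = 1 := fun i z => by
      have := b.sum_coord_apply_eq_one z
      rwa [Fintype.sum_subsingleton _ i] at this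
    simp [hone]
  · rw [ofPred_forall, ofPred_forall, interior_iInter_of_finite]
    refine iInter_congr fun i => ?_
    exact ((isOpenMap_barycentric_coord b i).preimage_interior_eq_interior_preimage
      (continuous_barycentric_coord b i) (Ici 0)).symm.trans (by rw [interior_Ici]; rfl)

theorem AffineIndependent.mem_intrinsicInterior_convexHull_range_iff [Nonempty ι]
    [NormedAddCommGroup E] [NormedSpace ℝ E] [FiniteDimensional ℝ E] {p : ι → E}
    (hp : AffineIndependent ℝ p) {x : E} :
    x ∈ intrinsicInterior ℝ (convexHull ℝ (range p)) ↔
      ∃ w : ι → ℝ, (∀ i, 0 < w i) ∧ ∑ i, w i = 1 ∧ ∑ i, w i • p i = x := by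
  classical
  set A := affineSpan ℝ (range p)
  have hmem : ∀ i, p i ∈ A := fun i => subset_affineSpan ℝ _ (mem_range_self i)
  let b : AffineBasis ι ℝ A :=
    ⟨fun i => ⟨p i, hmem i⟩, hp.of_comp A.subtype, by
      rw [show range (fun i => (⟨p i, hmem i⟩ : A)) = (↑) ⁻¹' range p by
        ext z; simp [Subtype.ext_iff]]
      exact affineSpan_coe_preimage_eq_top _⟩
  have hcoe : ∀ w : ι → ℝ, ∑ i, w i = 1 →
      ((univ.affineCombination ℝ b w : A) : E) = ∑ i, w i • p i := fun w hw => by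
    rw [← A.subtype_apply]
    exact (univ.map_affineCombination b w hw A.subtype).trans
      (univ.affineCombination_eq_linear_combination _ _ hw)
  have hcoord : ∀ z : A, (z : E) = ∑ i, b.coord i z • p i := fun z => by
    rw [← hcoe _ (b.sum_coord_apply_eq_one z), b.affineCombination_coord_eq_self]
  have hpre : ((↑) ⁻¹' convexHull ℝ (range p) : Set A) = {z | ∀ i, 0 ≤ b.coord i z} := by
    ext z
    rw [Set.mem_preimage, mem_convexHull_range_iff]
    constructor
    · rintro ⟨w, hw0, hw1, hwz⟩ i
      rw [show z = univ.affineCombination ℝ b w from Subtype.ext (by rw [hcoe w hw1, hwz]),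
        b.coord_apply_combination_of_mem (mem_univ i) hw1]
      exact hw0 i
    · exact fun hz => ⟨_, hz, b.sum_coord_apply_eq_one z, (hcoord z).symm⟩
  rw [mem_intrinsicInterior, affineSpan_convexHull, hpre, b.interior_setOf_nonneg_coord]
  constructor
  · rintro ⟨z, hz, rfl⟩
    exact ⟨_, hz, b.sum_coord_apply_eq_one z, (hcoord z).symm⟩
  · rintro ⟨w, hw0, hw1, rfl⟩
    refine ⟨univ.affineCombination ℝ b w, fun i => ?_, hcoe w hw1⟩
    rw [b.coord_apply_combination_of_mem (mem_univ i) hw1]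
    exact hw0 i

end Simplex

section Compositions

variable {ι : Type*} [Fintype ι] [Nonempty ι]

theorem card_sum_eq_choose (k : ℕ) :
    Nat.card {c : ι → ℕ // ∑ i, c i = k} =
      (Fintype.card ι - 1 + k).choose (Fintype.card ι - 1) := by
  classical
  have hι := Fintype.card_pos (α := ι)
  rw [← Nat.card_congr (Sym.equivNatSumOfFintype ι k), Nat.card_eq_fintype_card,
    Sym.card_sym_eq_choose, show Fintype.card ι + k - 1 = Fintype.card ι - 1 + k by omega]
  exact Nat.choose_symm_add.symm

theorem card_pos_sum_eq_choose {k : ℕ} (hk : 0 < k) :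
    Nat.card {c : ι → ℕ // (∀ i, 0 < c i) ∧ ∑ i, c i = k} =
      (k - 1).choose (Fintype.card ι - 1) := by
  set n := Fintype.card ι
  have hn : 0 < n := Fintype.card_pos
  have hshift : ∀ c : ι → ℕ, ∑ i, (c i + 1) = ∑ i, c i + n := fun c => by
    simp [sum_add_distrib, n]
  by_cases hnk : n ≤ k
  · let e : {c : ι → ℕ // (∀ i, 0 < c i) ∧ ∑ i, c i = k} ≃ {c : ι → ℕ // ∑ i, c i = k - n} :=
      { toFun := fun c => ⟨fun i => c.1 i - 1, by
          have hsum : ∑ i, (c.1 i - 1) + n = k := by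
            rw [← hshift, sum_congr rfl fun i _ => Nat.sub_add_cancel (c.2.1 i), c.2.2]
          dsimp only
          omega⟩
        invFun := fun c => ⟨fun i => c.1 i + 1, fun i => Nat.succ_pos _, by
          rw [hshift, c.2]; omega⟩
        left_inv := fun c => Subtype.ext (funext fun i => Nat.sub_add_cancel (c.2.1 i))
        right_inv := fun c => Subtype.ext (funext fun i => Nat.add_sub_cancel _ _) }
    rw [Nat.card_congr e, card_sum_eq_choose]
    congr 1
    omega
  · have : IsEmpty {c : ι → ℕ // (∀ i, 0 < c i) ∧ ∑ i, c i = k} := ⟨fun c => hnk <| by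
      rw [← c.2.2]
      calc n = ∑ _i : ι, 1 := by simp [n]
        _ ≤ ∑ i, c.1 i := sum_le_sum fun i _ => c.2.1 i⟩
    rw [Nat.card_of_isEmpty, Nat.choose_eq_zero_of_lt (by omega)]

end Compositions

theorem cast_choose_pred_eq_prod_div {d m q : ℕ} (n : ℕ) (hd : d ≠ 0) (hm : 0 < m)
    (hq : q = d * m) :
    (((m - 1).choose n : ℕ) : ℚ) =
      (∏ i ∈ range n, ((q : ℚ) - d * (i + 1))) / ((d : ℚ) ^ n * n.factorial) := by
  have hfactor : ∏ i ∈ range n, ((q : ℚ) - d * (i + 1)) =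
      (d : ℚ) ^ n * ∏ i ∈ range n, (((m - 1 : ℕ) : ℚ) - i) := by
    rw [show (d : ℚ) ^ n = ∏ _i ∈ range n, (d : ℚ) by simp, ← prod_mul_distrib]
    refine prod_congr rfl fun i _ => ?_
    rw [hq, Nat.cast_sub hm]
    push_cast
    ring
  rw [Nat.cast_choose_eq_descPochhammer_div, descPochhammer_eval_eq_prod_range, hfactor,
    mul_div_mul_left _ _ (pow_ne_zero _ (Nat.cast_ne_zero.2 hd))]

section Vertices

variable {ℓ g d : ℕ}

theorem sum_varpi_apply {j : ℕ} (hj : j ≤ ℓ + 1) : ∑ i, varpi ℓ j i = 0 := by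
  have hcount : ∑ i : Fin (ℓ + 1), (if (i : ℕ) < j then (1 : ℝ) else 0) = j := by
    rw [Fin.sum_univ_eq_sum_range (fun i => if i < j then (1 : ℝ) else 0), sum_boole,
      show (range (ℓ + 1)).filter (· < j) = range j by ext; simp; omega, card_range]
  simp only [varpi, sum_sub_distrib, hcount, sum_const, card_univ, Fintype.card_fin, nsmul_eq_mul]
  field_simp
  push_cast
  ring

theorem sum_fgb_apply (b : ℕ) : ∑ i, fgb ℓ g d b i = 0 := by
  simp only [fgb, Pi.smul_apply, Finset.sum_apply, smul_eq_mul, ← mul_sum]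
  rw [sum_comm, sum_eq_zero fun j hj => sum_varpi_apply (Finset.mem_range.1 (mem_filter.1 hj).1).le,
    mul_zero]

theorem natCast_mul_fgb_sub (hd : d ≠ 0) (b : ℕ) (i i' : Fin (ℓ + 1)) :
    (d : ℝ) * (fgb ℓ g d b i - fgb ℓ g d b i') =
      ∑ j ∈ (range (ℓ + 1)).filter (fun j => j % g = b),
        ((if (i : ℕ) < j then 1 else 0) - (if (i' : ℕ) < j then 1 else 0)) := by
  simp only [fgb, Pi.smul_apply, Finset.sum_apply, smul_eq_mul, ← mul_sub, ← mul_assoc,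
    mul_inv_cancel₀ (Nat.cast_ne_zero.2 hd : (d : ℝ) ≠ 0), one_mul, ← sum_sub_distrib, varpi]
  refine sum_congr rfl fun j _ => ?_
  ring

theorem exists_intCast_eq_natCast_mul_fgb_sub (hd : d ≠ 0) (b : ℕ) (i i' : Fin (ℓ + 1)) :
    ∃ n : ℤ, (d : ℝ) * (fgb ℓ g d b i - fgb ℓ g d b i') = n := by
  rw [natCast_mul_fgb_sub hd]
  norm_cast
  exact ⟨_, rfl⟩

theorem natCast_mul_fgb_castSucc_sub_succ (hd : d ≠ 0) (b : ℕ) (i : Fin ℓ) :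
    (d : ℝ) * (fgb ℓ g d b i.castSucc - fgb ℓ g d b i.succ) =
      if ((i : ℕ) + 1) % g = b then 1 else 0 := by
  rw [natCast_mul_fgb_sub hd]
  have hstep : ∀ j, ((if (i : ℕ) < j then (1 : ℝ) else 0) - if (i : ℕ) + 1 < j then 1 else 0) =
      if (i : ℕ) + 1 = j then 1 else 0 := fun j => by
    split_ifs <;> first | omega | norm_num
  simp only [Fin.val_castSucc, Fin.val_succ, hstep, sum_ite_eq, mem_filter, Finset.mem_range]
  simp [i.isLt]

theorem natCast_mul_sum_smul_fgb_castSucc_sub_succ (hd : d ≠ 0) (μ : Fin g → ℝ) {b : Fin g}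
    {i : Fin ℓ} (hi : ((i : ℕ) + 1) % g = b) :
    (d : ℝ) * ((∑ b', μ b' • fgb ℓ g d b') i.castSucc - (∑ b', μ b' • fgb ℓ g d b') i.succ) =
      μ b := by
  simp only [Finset.sum_apply, Pi.smul_apply, smul_eq_mul, ← sum_sub_distrib, ← mul_sub, mul_sum,
    mul_left_comm (d : ℝ), natCast_mul_fgb_castSucc_sub_succ hd, hi, Fin.val_inj, mul_ite,
    mul_one, mul_zero, sum_ite_eq, Finset.mem_univ, if_true]

theorem exists_succ_mod_eq (hgd : g * d = ℓ + 1) (b : Fin g) (hb : (b : ℕ) ≠ 0 ∨ d ≠ 1) :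
    ∃ i : Fin ℓ, ((i : ℕ) + 1) % g = b := by
  have hd : 0 < d := Nat.pos_of_ne_zero (by rintro rfl; simp at hgd)
  have hgl : g ≤ g * d := Nat.le_mul_of_pos_right g hd
  by_cases hb0 : (b : ℕ) = 0
  · have hgl2 : g * 2 ≤ g * d := Nat.mul_le_mul_left g (by omega)
    have := b.pos
    exact ⟨⟨g - 1, by omega⟩, by simp [Nat.sub_add_cancel this, hb0]⟩
  · exact ⟨⟨b - 1, by omega⟩, by simp [Nat.sub_add_cancel (Nat.pos_of_ne_zero hb0),
      Nat.mod_eq_of_lt b.isLt]⟩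

theorem affineIndependent_fgb (hgd : g * d = ℓ + 1) :
    AffineIndependent ℝ (fun b : Fin g => fgb ℓ g d b) := by
  have hd : d ≠ 0 := by rintro rfl; simp at hgd
  rw [affineIndependent_iff_of_fintype]
  intro w hw hwp
  rw [Finset.weightedVSub_eq_linear_combination _ hw] at hwp
  have hpos : ∀ b : Fin g, (b : ℕ) ≠ 0 → w b = 0 := fun b hb => by
    obtain ⟨i, hi⟩ := exists_succ_mod_eq hgd b (Or.inl hb)
    have := natCast_mul_sum_smul_fgb_castSucc_sub_succ hd w hi
    rwa [hwp, Pi.zero_apply, Pi.zero_apply, sub_self, mul_zero, eq_comm] at this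
  intro b
  by_cases hb : (b : ℕ) = 0
  · rwa [sum_eq_single b (fun b' _ hb' => hpos b' fun h => hb' (Fin.ext (h.trans hb.symm)))
      (by simp)] at hw
  · exact hpos b hb

theorem sum_smul_fgb_mem_ZA_iff (hgd : g * d = ℓ + 1) {μ : Fin g → ℝ} {n : ℤ}
    (hμ : ∑ b, μ b = n) :
    ∑ b, μ b • fgb ℓ g d b ∈ ZA ℓ ↔ ∀ b, ∃ k : ℤ, μ b = d * k := by
  have hd : d ≠ 0 := by rintro rfl; simp at hgd
  constructor
  · intro hx
    have hmain : ∀ b : Fin g, (b : ℕ) ≠ 0 ∨ d ≠ 1 → ∃ k : ℤ, μ b = d * k := fun b hb => by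
      obtain ⟨i, hi⟩ := exists_succ_mod_eq hgd b hb
      obtain ⟨k, hk⟩ := hx.2 i.castSucc i.succ
      exact ⟨k, by rw [← natCast_mul_sum_smul_fgb_castSucc_sub_succ hd μ hi, hk]⟩
    intro b
    by_cases hb : (b : ℕ) ≠ 0 ∨ d ≠ 1
    · exact hmain b hb
    obtain ⟨hb0, rfl⟩ : (b : ℕ) = 0 ∧ d = 1 := by tauto
    -- when `d = 1` the coordinate `μ 0` is only reached through the sum `∑ b, μ b = n`
    have hint : μ b ∈ (Int.castRingHom ℝ).range := by
      rw [← add_sum_erase _ _ (mem_univ b)] at hμ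
      rw [show μ b = n - ∑ b' ∈ univ.erase b, μ b' by linarith]
      refine sub_mem ⟨n, rfl⟩ (sum_mem fun b' hb' => ?_)
      obtain ⟨k, hk⟩ :=
        hmain b' (Or.inl fun h => ne_of_mem_erase hb' (Fin.ext (h.trans hb0.symm)))
      exact ⟨k, by simp [hk]⟩
    obtain ⟨k, hk⟩ := hint
    exact ⟨k, by simp [← hk]⟩
  · intro h
    choose k hk using h
    refine ⟨?_, fun i j => ?_⟩
    · simp only [Finset.sum_apply, Pi.smul_apply, smul_eq_mul]
      rw [sum_comm]
      simp [← mul_sum, sum_fgb_apply]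
    · choose N hN using fun b : Fin g => exists_intCast_eq_natCast_mul_fgb_sub (g := g) hd b i j
      refine ⟨∑ b, k b * N b, ?_⟩
      simp only [Finset.sum_apply, Pi.smul_apply, smul_eq_mul, ← sum_sub_distrib]
      push_cast
      refine sum_congr rfl fun b _ => ?_
      rw [hk, ← hN]
      ring

end Vertices

section LatticePoints

variable {ℓ g d : ℕ}

theorem setOf_fgb_eq_range :
    {v : Fin (ℓ + 1) → ℝ | ∃ b < g, v = fgb ℓ g d b} = range (fun b : Fin g => fgb ℓ g d b) := by
  ext v
  constructor
  · rintro ⟨b, hb, rfl⟩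
    exact ⟨⟨b, hb⟩, rfl⟩
  · rintro ⟨b, rfl⟩
    exact ⟨b, b.isLt, rfl⟩

variable {S : Set (Fin (ℓ + 1) → ℝ)} {W : Set (Fin g → ℝ)}

theorem setOf_smul_inter_ZA_eq_image (hgd : g * d = ℓ + 1) (hW0 : ∀ w ∈ W, ∀ b, 0 ≤ w b)
    (hW : ∀ c : ℝ, 0 < c → ∀ w ∈ W, c • w ∈ W)
    (hS : ∀ x, x ∈ S ↔ ∃ w ∈ W, ∑ b, w b = 1 ∧ ∑ b, w b • fgb ℓ g d b = x) {q : ℕ} (hq : 0 < q) :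
    {x | x ∈ (q : ℝ) • S ∧ x ∈ ZA ℓ} =
      (fun c : Fin g → ℕ => ∑ b, ((d * c b : ℕ) : ℝ) • fgb ℓ g d b) ''
        {c | (fun b => ((d * c b : ℕ) : ℝ)) ∈ W ∧ ∑ b, d * c b = q} := by
  have hd : (0 : ℝ) < d := Nat.cast_pos.2 (Nat.pos_of_ne_zero (by rintro rfl; simp at hgd))
  ext x
  simp only [mem_ofPred_eq, mem_image, mem_smul_set_iff_exists_weights hW hS (Nat.cast_pos.2 hq)]
  constructor
  · rintro ⟨⟨μ, hμW, hμq, rfl⟩, hZ⟩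
    rw [sum_smul_fgb_mem_ZA_iff hgd (n := q) (by exact_mod_cast hμq)] at hZ
    have hnat : ∀ b, ∃ c : ℕ, μ b = ((d * c : ℕ) : ℝ) := fun b => by
      obtain ⟨k, hk⟩ := hZ b
      have hk0 : 0 ≤ k := by
        have := hW0 μ hμW b
        rw [hk, mul_nonneg_iff_of_pos_left hd] at this
        exact_mod_cast this
      lift k to ℕ using hk0
      exact ⟨k, by rw [hk]; push_cast; rfl⟩
    choose c hc using hnat
    obtain rfl : μ = fun b => ((d * c b : ℕ) : ℝ) := funext hc
    simp only at hμq
    exact ⟨c, ⟨hμW, by exact_mod_cast hμq⟩, rfl⟩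
  · rintro ⟨c, ⟨hcW, hcq⟩, rfl⟩
    have hsum : ∑ b, ((d * c b : ℕ) : ℝ) = ((q : ℤ) : ℝ) := by exact_mod_cast hcq
    exact ⟨⟨_, hcW, by exact_mod_cast hcq, rfl⟩,
      (sum_smul_fgb_mem_ZA_iff hgd hsum).2 fun b => ⟨c b, by push_cast; rfl⟩⟩

theorem card_smul_inter_ZA (hgd : g * d = ℓ + 1) (hW0 : ∀ w ∈ W, ∀ b, 0 ≤ w b)
    (hW : ∀ c : ℝ, 0 < c → ∀ w ∈ W, c • w ∈ W)
    (hS : ∀ x, x ∈ S ↔ ∃ w ∈ W, ∑ b, w b = 1 ∧ ∑ b, w b • fgb ℓ g d b = x) {q : ℕ} (hq : 0 < q) :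
    Nat.card {x // x ∈ (q : ℝ) • S ∧ x ∈ ZA ℓ} =
      Nat.card {c : Fin g → ℕ // (fun b => ((d * c b : ℕ) : ℝ)) ∈ W ∧ ∑ b, d * c b = q} := by
  have hd : d ≠ 0 := by rintro rfl; simp at hgd
  change Nat.card {x | x ∈ (q : ℝ) • S ∧ x ∈ ZA ℓ} = Nat.card {c | _ ∧ _}
  rw [setOf_smul_inter_ZA_eq_image hgd hW0 hW hS hq]
  refine Nat.card_image_of_injOn fun c₁ hc₁ c₂ hc₂ heq => funext fun b => ?_
  have hsum : ∑ b, ((d * c₁ b : ℕ) : ℝ) = ∑ b, ((d * c₂ b : ℕ) : ℝ) := by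
    exact_mod_cast hc₁.2.trans hc₂.2.symm
  have := (affineIndependent_fgb hgd).eq_of_sum_eq_sum hsum heq b (mem_univ b)
  exact Nat.eq_of_mul_eq_mul_left (Nat.pos_of_ne_zero hd) (by exact_mod_cast this)

theorem card_smul_convexHull_inter_ZA (hgd : g * d = ℓ + 1) {q : ℕ} (hq : 0 < q) :
    Nat.card {x // x ∈ (q : ℝ) • convexHull ℝ (range fun b : Fin g => fgb ℓ g d b) ∧ x ∈ ZA ℓ} =
      Nat.card {c : Fin g → ℕ // ∑ b, d * c b = q} := by
  rw [card_smul_inter_ZA hgd (W := {w | ∀ b, 0 ≤ w b}) (fun w hw => hw)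
    (fun c hc w hw b => mul_nonneg hc.le (hw b)) (fun x => mem_convexHull_range_iff) hq]
  simp only [mem_ofPred_eq, Nat.cast_nonneg, implies_true, true_and]

theorem card_smul_intrinsicInterior_inter_ZA (hgd : g * d = ℓ + 1) {q : ℕ} (hq : 0 < q) :
    Nat.card {x // x ∈ (q : ℝ) • intrinsicInterior ℝ
        (convexHull ℝ (range fun b : Fin g => fgb ℓ g d b)) ∧ x ∈ ZA ℓ} =
      Nat.card {c : Fin g → ℕ // (∀ b, 0 < c b) ∧ ∑ b, d * c b = q} := by
  have hd : 0 < d := Nat.pos_of_ne_zero (by rintro rfl; simp at hgd)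
  have : Nonempty (Fin g) := ⟨⟨0, Nat.pos_of_ne_zero (by rintro rfl; simp at hgd)⟩⟩
  rw [card_smul_inter_ZA hgd (W := {w | ∀ b, 0 < w b}) (fun w hw b => (hw b).le)
    (fun c hc w hw b => mul_pos hc (hw b))
    (fun x => (affineIndependent_fgb hgd).mem_intrinsicInterior_convexHull_range_iff) hq]
  simp [hd]

end LatticePoints

theorem stmt_18_general {ℓ : ℕ} (g d : ℕ) (hg : 0 < g) (hd : 0 < d)
    (hgd : g * d = ℓ + 1) (q : ℕ) (hq : 0 < q) :
    (¬ d ∣ q →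
      Nat.card {x : Fin (ℓ + 1) → ℝ //
        x ∈ (q : ℝ) • convexHull ℝ {v : Fin (ℓ + 1) → ℝ | ∃ b < g, v = fgb ℓ g d b} ∧
        x ∈ ZA ℓ} = 0) ∧
    (d ∣ q →
      Nat.card {x : Fin (ℓ + 1) → ℝ //
        x ∈ (q : ℝ) • convexHull ℝ {v : Fin (ℓ + 1) → ℝ | ∃ b < g, v = fgb ℓ g d b} ∧
        x ∈ ZA ℓ} = Nat.choose (g - 1 + q / d) (g - 1)) ∧
    (¬ d ∣ q →
      Nat.card {x : Fin (ℓ + 1) → ℝ //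
        x ∈ (q : ℝ) • intrinsicInterior ℝ
          (convexHull ℝ {v : Fin (ℓ + 1) → ℝ | ∃ b < g, v = fgb ℓ g d b}) ∧
        x ∈ ZA ℓ} = 0) ∧
    (d ∣ q →
      (Nat.card {x : Fin (ℓ + 1) → ℝ //
        x ∈ (q : ℝ) • intrinsicInterior ℝ
          (convexHull ℝ {v : Fin (ℓ + 1) → ℝ | ∃ b < g, v = fgb ℓ g d b}) ∧
        x ∈ ZA ℓ} : ℚ) =
      (∏ i ∈ Finset.range (g - 1), ((q : ℚ) - d * (i + 1))) /
        ((d : ℚ) ^ (g - 1) * Nat.factorial (g - 1))) := by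
  have : Nonempty (Fin g) := ⟨⟨0, hg⟩⟩
  have hdvd : ∀ c : Fin g → ℕ, ∑ b, d * c b = q → d ∣ q := fun c hc =>
    hc ▸ dvd_sum fun b _ => dvd_mul_right d (c b)
  have hsum : ∀ m, q = d * m → ∀ c : Fin g → ℕ, ∑ b, d * c b = q ↔ ∑ b, c b = m :=
    fun m hm c => by rw [← mul_sum, hm, Nat.mul_left_cancel_iff hd]
  rw [setOf_fgb_eq_range, card_smul_convexHull_inter_ZA hgd hq,
    card_smul_intrinsicInterior_inter_ZA hgd hq]
  refine ⟨fun hdq => ?_, fun ⟨m, hm⟩ => ?_, fun hdq => ?_, fun ⟨m, hm⟩ => ?_⟩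
  · exact Nat.card_eq_zero.2 (Or.inl ⟨fun c => hdq (hdvd c c.2)⟩)
  · rw [Nat.card_congr (Equiv.subtypeEquivRight (hsum m hm)), card_sum_eq_choose,
      Fintype.card_fin, hm, Nat.mul_div_cancel_left m hd]
  · exact Nat.card_eq_zero.2 (Or.inl ⟨fun c => hdq (hdvd c c.2.2)⟩)
  · have hm0 : 0 < m := Nat.pos_of_mul_pos_left (hm ▸ hq)
    rw [Nat.card_congr (Equiv.subtypeEquivRight fun c => and_congr_right' (hsum m hm c)),
      card_pos_sum_eq_choose hm0, Fintype.card_fin]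
    exact cast_choose_pred_eq_prod_div _ hd.ne' hm0 hm

/-- In type `A_ℓ`, with `g · d = ℓ + 1` and
`P = conv{f^g_0, …, f^g_{g−1}}`, the Ehrhart counting function of `P` with respect to the
coweight lattice `Z` satisfies `#(qP ∩ Z) = 0` if `d ∤ q` and
`#(qP ∩ Z) = C(g − 1 + q/d, g − 1)` if `d ∣ q`; consequently for the relative interior `P°`,
`#(qP° ∩ Z) = 0` if `d ∤ q` and
`#(qP° ∩ Z) = (q − d)(q − 2d)⋯(q − d(g−1)) / (d^{g−1} (g−1)!)` if `d ∣ q`. -/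
theorem stmt_18 {ℓ : ℕ} (hℓ : 0 < ℓ) (g d : ℕ) (hg : 0 < g) (hd : 0 < d)
    (hgd : g * d = ℓ + 1) (q : ℕ) (hq : 0 < q) :
    (¬ d ∣ q →
      Nat.card {x : Fin (ℓ + 1) → ℝ //
        x ∈ (q : ℝ) • convexHull ℝ {v : Fin (ℓ + 1) → ℝ | ∃ b < g, v = fgb ℓ g d b} ∧
        x ∈ ZA ℓ} = 0) ∧
    (d ∣ q →
      Nat.card {x : Fin (ℓ + 1) → ℝ //
        x ∈ (q : ℝ) • convexHull ℝ {v : Fin (ℓ + 1) → ℝ | ∃ b < g, v = fgb ℓ g d b} ∧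
        x ∈ ZA ℓ} = Nat.choose (g - 1 + q / d) (g - 1)) ∧
    (¬ d ∣ q →
      Nat.card {x : Fin (ℓ + 1) → ℝ //
        x ∈ (q : ℝ) • intrinsicInterior ℝ
          (convexHull ℝ {v : Fin (ℓ + 1) → ℝ | ∃ b < g, v = fgb ℓ g d b}) ∧
        x ∈ ZA ℓ} = 0) ∧
    (d ∣ q →
      (Nat.card {x : Fin (ℓ + 1) → ℝ //
        x ∈ (q : ℝ) • intrinsicInterior ℝ
          (convexHull ℝ {v : Fin (ℓ + 1) → ℝ | ∃ b < g, v = fgb ℓ g d b}) ∧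
        x ∈ ZA ℓ} : ℚ) =
      (∏ i ∈ Finset.range (g - 1), ((q : ℚ) - d * (i + 1))) /
        ((d : ℚ) ^ (g - 1) * Nat.factorial (g - 1))) :=
  stmt_18_general g d hg hd hgd q hq
end

section
/- Let σ := (1 2 ⋯ ℓ+1) ∈ 𝔖_{ℓ+1} and k ∈ {1, …, ℓ+1}, and set g := gcd(ℓ+1, k) and d := (ℓ+1)/g. Then #{τ ∈ 𝔖_{ℓ+1} : τσ^kτ^{-1} ∈ ⟨σ⟩} = φ_g(ℓ+1) · (ℓ+1)(ℓ+1−d)(ℓ+1−2d) ⋯ (ℓ+1−d(g−1)). -/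
/-!
Sorting the permutations `τ` by the value `h = τ σ^k τ⁻¹ ∈ ⟨σ⟩`, every nonempty fibre is a coset
of the centralizer of `σ^k`, so the count is the number of conjugates of `σ^k` lying in `⟨σ⟩`
times the order of that centralizer. Each element of `⟨σ⟩` has all its orbits of the same length,
so its cycle type, hence its conjugacy class, is determined by its order: the conjugates of `σ^k`
in `⟨σ⟩` are its `φ(d) = φ_g(ℓ+1)` elements of order `d`. Finally `σ^k` is a product of `g`
disjoint `d`-cycles, whose centralizer has order `g! d^g = (ℓ+1)(ℓ+1-d)⋯(ℓ+1-d(g-1))`.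
-/

open Finset Nat

section

variable {G : Type*} [Group G]

theorem nat_card_conj_eq_of_isConj {c h : G} (hch : IsConj c h) :
    Nat.card {τ : G // τ * c * τ⁻¹ = h} = Nat.card (Subgroup.centralizer {c}) := by
  obtain ⟨τ₀, rfl⟩ := isConj_iff.mp hch
  refine Nat.card_congr
    { toFun := fun τ => ⟨τ₀⁻¹ * τ.1, Subgroup.mem_centralizer_singleton_iff.mpr ?_⟩
      invFun := fun z => ⟨τ₀ * z.1, ?_⟩
      left_inv := fun τ => by simp
      right_inv := fun z => by simp }
  · calc τ₀⁻¹ * τ.1 * c = τ₀⁻¹ * (τ.1 * c * τ.1⁻¹) * τ.1 := by group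
      _ = c * (τ₀⁻¹ * τ.1) := by rw [τ.2]; group
  · calc τ₀ * z.1 * c * (τ₀ * z.1)⁻¹ = τ₀ * (z.1 * c) * z.1⁻¹ * τ₀⁻¹ := by group
      _ = τ₀ * c * τ₀⁻¹ := by rw [Subgroup.mem_centralizer_singleton_iff.mp z.2]; group

theorem nat_card_conj_mem [Finite G] (c : G) (H : Subgroup G) :
    Nat.card {τ : G // τ * c * τ⁻¹ ∈ H} =
      Nat.card {h : H // IsConj c h} * Nat.card (Subgroup.centralizer {c}) := by
  classical
  have : Fintype G := Fintype.ofFinite G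
  let e : {τ : G // τ * c * τ⁻¹ ∈ H} ≃ Σ h : {h : H // IsConj c h}, {τ : G // τ * c * τ⁻¹ = h} :=
    { toFun := fun τ => ⟨⟨⟨_, τ.2⟩, isConj_iff.mpr ⟨τ, rfl⟩⟩, ⟨τ, rfl⟩⟩
      invFun := fun p => ⟨p.2, by rw [p.2.2]; exact p.1.1.2⟩
      left_inv := fun τ => rfl
      right_inv := fun p => Sigma.subtype_ext (Subtype.ext (Subtype.ext p.2.2)) rfl }
  rw [Nat.card_congr e, Nat.card_sigma,
    Finset.sum_congr rfl fun h _ => nat_card_conj_eq_of_isConj h.2, Finset.sum_const,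
    Finset.card_univ, smul_eq_mul, ← Nat.card_eq_fintype_card]

theorem nat_card_orderOf_eq_of_mem_zpowers [Finite G] {x y : G} (hy : y ∈ Subgroup.zpowers x) :
    Nat.card {h : Subgroup.zpowers x // orderOf (h : G) = orderOf y} = φ (orderOf y) := by
  classical
  have : Fintype G := Fintype.ofFinite G
  simp only [Subgroup.orderOf_coe]
  rw [Nat.card_eq_fintype_card, Fintype.card_subtype, IsCyclic.card_orderOf_eq_totient]
  exact Fintype.card_zpowers (x := x) ▸ orderOf_dvd_of_mem_zpowers hy

end

namespace Equiv.Perm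

variable {α : Type*} [Fintype α] [DecidableEq α]

/-- `⟨π⟩` acts freely, i.e. all orbits of `π` have the same length. -/
def IsSemiregular (π : Perm α) : Prop :=
  ∀ (j : ℕ) (x : α), (π ^ j) x = x → π ^ j = 1

namespace IsSemiregular

variable {π : Perm α}

theorem support_eq_univ (hπ : IsSemiregular π) (h1 : π ≠ 1) : π.support = univ :=
  eq_univ_of_forall fun x => mem_support.mpr fun hx => h1 (by simpa using hπ 1 x (by simpa))

theorem cycleType_eq (hπ : IsSemiregular π) (h1 : π ≠ 1) :
    π.cycleType = Multiset.replicate (Fintype.card α / orderOf π) (orderOf π) := by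
  have hmem : ∀ n ∈ π.cycleType, n = orderOf π := by
    intro n hn
    obtain ⟨c, τ, rfl, hcτ, hc, rfl⟩ := mem_cycleType_iff.mp hn
    obtain ⟨x, hx, -⟩ := id hc
    have hτx : τ x = x := (hcτ x).resolve_left hx
    have hfix : ((c * τ) ^ #c.support) x = x := by
      rw [hcτ.commute.mul_pow, mul_apply, pow_apply_eq_self_of_apply_eq_self hτx,
        ← hc.orderOf, pow_orderOf_eq_one, one_apply]
    exact Nat.dvd_antisymm (dvd_of_mem_cycleType hn) (orderOf_dvd_of_pow_eq_one (hπ _ x hfix))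
  have hrep := Multiset.eq_replicate_card.mpr hmem
  have hsum : π.cycleType.card * orderOf π = Fintype.card α := by
    rw [← Finset.card_univ, ← hπ.support_eq_univ h1, ← sum_cycleType, hrep,
      Multiset.sum_replicate, Multiset.card_replicate, smul_eq_mul]
  rw [hrep, ← hsum, Nat.mul_div_cancel _ (orderOf_pos π)]

theorem nat_card_centralizer (hπ : IsSemiregular π) :
    Nat.card (Subgroup.centralizer {π}) =
      (Fintype.card α / orderOf π)! * orderOf π ^ (Fintype.card α / orderOf π) := by
  rw [Equiv.Perm.nat_card_centralizer]
  rcases eq_or_ne π 1 with rfl | h1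
  · simp
  · rw [sum_cycleType, hπ.support_eq_univ h1, Finset.card_univ, Nat.sub_self,
      hπ.cycleType_eq h1, Multiset.prod_replicate, Multiset.toFinset_replicate]
    split_ifs with h0 <;> simp [h0, mul_comm]

theorem isConj_iff {σ : Perm α} (hπ : IsSemiregular π) (hσ : IsSemiregular σ) :
    IsConj π σ ↔ orderOf π = orderOf σ := by
  refine ⟨fun h => ?_, fun h => ?_⟩
  · rw [← lcm_cycleType, ← lcm_cycleType, isConj_iff_cycleType_eq.mp h]
  rcases eq_or_ne π 1 with rfl | hπ1
  · rw [orderOf_one, eq_comm, orderOf_eq_one_iff] at h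
    rw [h]
  have hσ1 : σ ≠ 1 := by rintro rfl; exact hπ1 (orderOf_eq_one_iff.mp (h.trans orderOf_one))
  rw [isConj_iff_cycleType_eq, hπ.cycleType_eq hπ1, hσ.cycleType_eq hσ1, h]

end IsSemiregular

theorem IsCycle.isSemiregular_of_mem_zpowers {σ π : Perm α} (hσ : IsCycle σ)
    (hsupp : σ.support = univ) (hπ : π ∈ Subgroup.zpowers σ) : IsSemiregular π := by
  obtain ⟨m, rfl⟩ := mem_powers_iff_mem_zpowers.mpr hπ
  intro j x hx
  rw [← pow_mul] at hx ⊢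
  exact (hσ.pow_eq_one_iff' (mem_support.mp (hsupp ▸ mem_univ x))).mpr hx

end Equiv.Perm

theorem card_filter_Icc_gcd_eq_totient {n g : ℕ} (hg : g ∣ n) :
    #{i ∈ Icc 1 n | n.gcd i = g} = φ (n / g) := by
  have hper : Function.Periodic (fun i => n.gcd i = g) n := fun i => by
    simp only [Nat.gcd_add_self_right]
  rw [totient_div_of_dvd hg, ← count_eq_card_filter_range,
    ← filter_Ico_card_eq_of_periodic 1 n _ hper, add_comm, Ico_add_one_right_eq_Icc]

theorem prod_range_sub_mul_of_eq_mul {n g d : ℕ} (h : n = g * d) :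
    ∏ j ∈ range g, (n - d * j) = g ! * d ^ g := by
  subst h
  rw [← prod_range_reflect]
  have hterm : ∀ j ∈ range g, g * d - d * (g - 1 - j) = d * (j + 1) := by
    intro j hj
    rw [mem_range] at hj
    have hsplit : d * (g - 1 - j) + d * (j + 1) = g * d := by
      rw [← Nat.mul_add, Nat.mul_comm]
      congr 1
      omega
    omega
  rw [prod_congr rfl hterm, prod_mul_distrib, prod_const, card_range,
    prod_range_add_one_eq_factorial, Nat.mul_comm]

theorem orderOf_finRotate_succ (n : ℕ) : orderOf (finRotate (n + 1)) = n + 1 := by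
  rcases n with _ | n
  · simp [Subsingleton.elim (finRotate 1) 1]
  · rw [isCycle_finRotate.orderOf, support_finRotate, Finset.card_univ, Fintype.card_fin]

theorem orderOf_pow_finRotate (n k : ℕ) :
    orderOf (finRotate (n + 1) ^ k) = (n + 1) / (n + 1).gcd k := by
  rw [orderOf_pow, orderOf_finRotate_succ]

theorem isSemiregular_of_mem_zpowers_finRotate {n : ℕ} {π : Equiv.Perm (Fin n)}
    (hπ : π ∈ Subgroup.zpowers (finRotate n)) : π.IsSemiregular := by
  rcases lt_or_ge n 2 with hn | hn
  · have : Subsingleton (Fin n) := Fin.subsingleton_iff_le_one.mpr (by omega)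
    exact fun _ _ _ => Subsingleton.elim _ _
  · exact (isCycle_finRotate_of_le hn).isSemiregular_of_mem_zpowers
      (support_finRotate_of_le hn) hπ

theorem nat_card_isConj_pow_finRotate (n k : ℕ) :
    Nat.card {h : Subgroup.zpowers (finRotate (n + 1)) // IsConj (finRotate (n + 1) ^ k) h} =
      φ ((n + 1) / (n + 1).gcd k) := by
  have hk := pow_mem (Subgroup.mem_zpowers (finRotate (n + 1))) k
  rw [← orderOf_pow_finRotate, ← nat_card_orderOf_eq_of_mem_zpowers hk]
  refine Nat.card_congr (Equiv.subtypeEquivRight fun h => ?_)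
  rw [(isSemiregular_of_mem_zpowers_finRotate hk).isConj_iff
    (isSemiregular_of_mem_zpowers_finRotate h.2), eq_comm]

theorem nat_card_centralizer_pow_finRotate (n k : ℕ) :
    Nat.card (Subgroup.centralizer {finRotate (n + 1) ^ k}) =
      ((n + 1).gcd k)! * ((n + 1) / (n + 1).gcd k) ^ (n + 1).gcd k := by
  have hk := pow_mem (Subgroup.mem_zpowers (finRotate (n + 1))) k
  rw [(isSemiregular_of_mem_zpowers_finRotate hk).nat_card_centralizer, Fintype.card_fin,
    orderOf_pow_finRotate, Nat.div_div_self (Nat.gcd_dvd_left _ _) n.add_one_ne_zero]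

theorem stmt_19_general (ℓ k : ℕ)
    (g d : ℕ) (hg : g = Nat.gcd (ℓ + 1) k) (hd : d = (ℓ + 1) / g) :
    Nat.card {τ : Equiv.Perm (Fin (ℓ + 1)) //
        τ * (finRotate (ℓ + 1)) ^ k * τ⁻¹ ∈ Subgroup.zpowers (finRotate (ℓ + 1))} =
      ((Finset.Icc 1 (ℓ + 1)).filter fun i => Nat.gcd (ℓ + 1) i = g).card *
        ∏ j ∈ Finset.range g, (ℓ + 1 - d * j) := by
  subst hg hd
  have hgd := Nat.gcd_dvd_left (ℓ + 1) k
  rw [nat_card_conj_mem, nat_card_isConj_pow_finRotate, nat_card_centralizer_pow_finRotate,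
    card_filter_Icc_gcd_eq_totient hgd,
    prod_range_sub_mul_of_eq_mul (Nat.mul_div_cancel' hgd).symm]

/-- Let `σ = (1 2 ⋯ ℓ+1)` (i.e. `finRotate (ℓ+1)`) and `k ∈ {1,…,ℓ+1}`,
and set `g = gcd(ℓ+1, k)` and `d = (ℓ+1)/g`.  Then
`#{τ ∈ 𝔖_{ℓ+1} : τ σ^k τ⁻¹ ∈ ⟨σ⟩} = φ_g(ℓ+1) · (ℓ+1)(ℓ+1−d)(ℓ+1−2d)⋯(ℓ+1−d(g−1))`,
where `φ_g(ℓ+1) = #{i ∈ {1,…,ℓ+1} : gcd(ℓ+1, i) = g}`. -/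
theorem stmt_19 (ℓ k : ℕ) (hk1 : 1 ≤ k) (hk2 : k ≤ ℓ + 1)
    (g d : ℕ) (hg : g = Nat.gcd (ℓ + 1) k) (hd : d = (ℓ + 1) / g) :
    Nat.card {τ : Equiv.Perm (Fin (ℓ + 1)) //
        τ * (finRotate (ℓ + 1)) ^ k * τ⁻¹ ∈ Subgroup.zpowers (finRotate (ℓ + 1))} =
      ((Finset.Icc 1 (ℓ + 1)).filter fun i => Nat.gcd (ℓ + 1) i = g).card *
        ∏ j ∈ Finset.range g, (ℓ + 1 - d * j) :=
  stmt_19_general ℓ k g d hg hd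
end
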